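/- arXiv:2404.06857 — 8 statements merged into one kernel-verified Lean document; each statement's English description precedes it below -/
import Mathlib

section
/- Let G ⊆ [-∞,∞]^X be a complete subspace (stable under arbitrary suprema and addition of real scalars) that is proper and point separating. For x ∈ X define e_x = sup{u ∈ G | u(x) ≤ 0}. Then: (a) e_x ∈ G and e_x(x) = 0; (b) e_x is inf-irreducible in G; (c) for x ≠ x' and λ ∈ [-∞,∞], e_x ≠ e_{x'} + λ; (d) e_x(y) = sup_{u ∈ G} (u(y) − u(x)) with −∞ absorbing; (e) every f ∈ G satisfies f = inf_{x ∈ Dom(f)} (e_x + f(x)); (f) the triangle inequality e_x(x'') ≤ e_{x'}(x'') + e_x(x') holds for all x, x', x'' ∈ X. -/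
open scoped Classical

/-- `G` is stable under arbitrary pointwise suprema. -/
def SupStable {X : Type*} (G : Set (X → EReal)) : Prop :=
  ∀ S : Set (X → EReal), S ⊆ G → (fun x => ⨆ f ∈ S, f x) ∈ G

/-- A complete subspace: stable under arbitrary suprema and addition of real scalars. -/
def CompleteSubspace {X : Type*} (G : Set (X → EReal)) : Prop :=
  SupStable G ∧ ∀ g ∈ G, ∀ l : ℝ, (fun x => g x + (l : EReal)) ∈ G

/-- `G` is proper: at every point some function of `G` takes a finite value. -/
def ProperAt {X : Type*} (G : Set (X → EReal)) : Prop :=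
  ∀ x : X, ∃ g ∈ G, g x ≠ ⊤ ∧ g x ≠ ⊥

/-- `G` is point separating. -/
def Separating {X : Type*} (G : Set (X → EReal)) : Prop :=
  ∀ x x' : X, x ≠ x' → ∃ g₁ ∈ G, ∃ g₂ ∈ G, ∃ a₁ b₁ a₂ b₂ : ℝ,
    g₁ x = (a₁ : EReal) ∧ g₁ x' = (b₁ : EReal) ∧ g₂ x = (a₂ : EReal) ∧ g₂ x' = (b₂ : EReal) ∧
    a₁ - b₁ ≠ a₂ - b₂

/-- `e_x = sup { u ∈ G | u(x) ≤ 0 }`. -/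
noncomputable def eFun {X : Type*} (G : Set (X → EReal)) (x : X) : X → EReal :=
  fun z => ⨆ u ∈ {u | u ∈ G ∧ u x ≤ 0}, u z

/-- Addition on `EReal` with `+∞` absorbing. -/
noncomputable def tadd (a b : EReal) : EReal := if a = ⊤ ∨ b = ⊤ then ⊤ else a + b

/-!
`e_x` is the largest element of `G` vanishing at `x`. Since `G` is translation invariant, every
`u ∈ G` that is finite at `x` satisfies `u - u x ≤ e_x`, which gives `u y - u x ≤ e_x y` for all
`u ∈ G` (with the EReal conventions, the infinite cases follow by translating `u` arbitrarily far).
This single inequality yields the formula for `e_x`, the representation of `f ∈ G` as an infimum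
of translates of the `e_x` (take `u = f`), and the triangle inequality (take `u = e_x`). If
`e_x = e_{x'} + λ`, evaluating at `x` and `x'` forces `e_{x'} x + e_x x' = 0`, whereas two functions
of `G` with different increments between `x` and `x'` make this sum positive.
-/

def TranslationStable {X : Type*} (G : Set (X → EReal)) : Prop :=
  ∀ g ∈ G, ∀ l : ℝ, (fun x => g x + (l : EReal)) ∈ G

namespace EReal

lemma eq_top_of_forall_add_coe_le {a b : EReal} (ha : a ≠ ⊥) (h : ∀ l : ℝ, a + l ≤ b) :
    b = ⊤ := by
  induction a with
  | bot => exact absurd rfl ha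
  | coe r =>
    refine (eq_top_iff_forall_lt b).mpr fun y => ?_
    calc (y : EReal) < ((y + 1 : ℝ) : EReal) := by exact_mod_cast lt_add_one y
      _ = r + ((y + 1 - r : ℝ) : EReal) := by rw [← coe_add]; ring_nf
      _ ≤ b := h _
  | top => simpa using h 0

end EReal

lemma le_tadd_of_sub_le {a b c : EReal} (h : a - b ≤ c) : a ≤ tadd c b := by
  unfold tadd
  split_ifs with htop
  · exact le_top
  · push Not at htop
    induction b with
    | bot =>
      rcases eq_or_ne a ⊥ with rfl | ha
      · exact bot_le
      · exact absurd (top_le_iff.mp (EReal.sub_bot ha ▸ h)) htop.1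
    | coe b =>
      exact (EReal.sub_le_iff_le_add (.inl (EReal.coe_ne_bot b)) (.inl (EReal.coe_ne_top b))).mp h
    | top => exact absurd rfl htop.2

section

variable {X : Type*} {G : Set (X → EReal)}

lemma eFun_mem (hG : SupStable G) (x : X) : eFun G x ∈ G :=
  hG {u | u ∈ G ∧ u x ≤ 0} fun _ hu => hu.1

lemma le_eFun {u : X → EReal} (hu : u ∈ G) {x : X} (hx : u x ≤ 0) : u ≤ eFun G x :=
  fun z => le_iSup₂ (f := fun v (_ : v ∈ {u | u ∈ G ∧ u x ≤ 0}) => v z) u ⟨hu, hx⟩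

lemma eFun_le {x z : X} {b : EReal} (h : ∀ u ∈ G, u x ≤ 0 → u z ≤ b) : eFun G x z ≤ b :=
  iSup₂_le fun u hu => h u hu.1 hu.2

lemma sub_le_eFun (hG : TranslationStable G) {u : X → EReal} (hu : u ∈ G) (x y : X) :
    u y - u x ≤ eFun G x y := by
  have translate_le : ∀ l : ℝ, u x + l ≤ 0 → u y + l ≤ eFun G x y := fun l hl =>
    le_eFun (hG u hu l) hl y
  induction hux : u x with
  | bot =>
    rcases eq_or_ne (u y) ⊥ with huy | huy
    · simp [huy]
    · rw [EReal.eq_top_of_forall_add_coe_le huy fun l => translate_le l (by simp [hux])]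
      exact le_top
  | coe a =>
    have := translate_le (-a) (by rw [hux, ← EReal.coe_add]; simp)
    rwa [EReal.coe_neg, ← sub_eq_add_neg] at this
  | top => simp

lemma eFun_self (hG : TranslationStable G) (hprop : ProperAt G) (x : X) : eFun G x x = 0 := by
  refine le_antisymm (eFun_le fun u _ hu => hu) ?_
  obtain ⟨g, hg, hg_top, hg_bot⟩ := hprop x
  simpa [EReal.sub_self hg_top hg_bot] using sub_le_eFun hG hg x x

lemma eFun_inf_irreducible (hG : TranslationStable G) (hprop : ProperAt G) (x : X)
    {g h : X → EReal} (hg : g ∈ G) (hh : h ∈ G) (heq : eFun G x = g ⊓ h) :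
    eFun G x = g ∨ eFun G x = h := by
  have hx : g x ⊓ h x = 0 := by rw [← Pi.inf_apply, ← heq, eFun_self hG hprop x]
  rcases le_total (g x) (h x) with hgh | hhg
  · left
    exact le_antisymm (heq ▸ inf_le_left) (le_eFun hg (by rw [← hx, inf_eq_left.mpr hgh]))
  · right
    exact le_antisymm (heq ▸ inf_le_right) (le_eFun hh (by rw [← hx, inf_eq_right.mpr hhg]))

lemma eFun_add_eFun_pos (hG : TranslationStable G) (hsep : Separating G) {x x' : X}
    (hne : x ≠ x') : 0 < eFun G x' x + eFun G x x' := by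
  obtain ⟨g₁, hg₁, g₂, hg₂, a₁, b₁, a₂, b₂, h₁, h₁', h₂, h₂', hab⟩ := hsep x x' hne
  have increments_le : ∀ {u v : X → EReal}, u ∈ G → v ∈ G → ∀ {a b c d : ℝ}, u x = a → u x' = b →
      v x = c → v x' = d → (((a - b) + (d - c) : ℝ) : EReal) ≤ eFun G x' x + eFun G x x' := by
    intro u v hu hv a b c d hua hub hvc hvd
    have hu' := sub_le_eFun hG hu x' x
    have hv' := sub_le_eFun hG hv x x'
    rw [hua, hub, ← EReal.coe_sub] at hu'
    rw [hvc, hvd, ← EReal.coe_sub] at hv'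
    exact EReal.coe_add _ _ ▸ add_le_add hu' hv'
  rcases lt_or_gt_of_ne hab with hlt | hgt
  · exact lt_of_lt_of_le (by exact_mod_cast (by linarith : (0 : ℝ) < a₂ - b₂ + (b₁ - a₁)))
      (increments_le hg₂ hg₁ h₂ h₂' h₁ h₁')
  · exact lt_of_lt_of_le (by exact_mod_cast (by linarith : (0 : ℝ) < a₁ - b₁ + (b₂ - a₂)))
      (increments_le hg₁ hg₂ h₁ h₁' h₂ h₂')

lemma eFun_ne_add (hG : TranslationStable G) (hprop : ProperAt G) (hsep : Separating G)
    {x x' : X} (hne : x ≠ x') (l : EReal) : eFun G x ≠ fun z => eFun G x' z + l := by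
  intro heq
  have at_x : eFun G x' x + l = 0 := by rw [← eFun_self hG hprop x]; exact (congrFun heq x).symm
  have at_x' : eFun G x x' = l := by rw [congrFun heq x', eFun_self hG hprop x', zero_add]
  exact (eFun_add_eFun_pos hG hsep hne).ne' (at_x' ▸ at_x)

lemma eFun_eq_iSup_sub (hG : TranslationStable G) (x y : X) :
    eFun G x y = ⨆ u ∈ G, (u y - u x) := by
  refine le_antisymm (eFun_le fun u hu hux => ?_) (iSup₂_le fun u hu => sub_le_eFun hG hu x y)
  calc u y = u y + 0 := (add_zero _).symm
    _ ≤ u y - u x := add_le_add_right (by simpa using EReal.neg_le_neg_iff.mpr hux) _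
    _ ≤ ⨆ u ∈ G, (u y - u x) := le_iSup₂ (f := fun u (_ : u ∈ G) => u y - u x) u hu

lemma eq_iInf_tadd_eFun (hG : TranslationStable G) (hprop : ProperAt G) {f : X → EReal}
    (hf : f ∈ G) (y : X) : f y = ⨅ x ∈ {x | f x ≠ ⊤}, tadd (eFun G x y) (f x) := by
  refine le_antisymm (le_iInf₂ fun x _ => le_tadd_of_sub_le (sub_le_eFun hG hf x y)) ?_
  rcases eq_or_ne (f y) ⊤ with hy | hy
  · rw [hy]
    exact le_top
  · refine (iInf₂_le y hy).trans_eq ?_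
    rw [eFun_self hG hprop y, tadd, if_neg (by simp [hy]), zero_add]

lemma eFun_le_tadd (hG : CompleteSubspace G) (x x' x'' : X) :
    eFun G x x'' ≤ tadd (eFun G x' x'') (eFun G x x') :=
  le_tadd_of_sub_le (sub_le_eFun hG.2 (eFun_mem hG.1 x) x' x'')

end

theorem stmt5 {X : Type*} (G : Set (X → EReal)) (hG : CompleteSubspace G)
    (hprop : ProperAt G) (hsep : Separating G) :
    -- (a)
    (∀ x, eFun G x ∈ G ∧ eFun G x x = 0) ∧
    -- (b) e_x is inf-irreducible in G
    (∀ x, ∀ g ∈ G, ∀ h ∈ G, eFun G x = g ⊓ h → eFun G x = g ∨ eFun G x = h) ∧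
    -- (c)
    (∀ x x' : X, x ≠ x' → ∀ l : EReal, eFun G x ≠ fun z => eFun G x' z + l) ∧
    -- (d)
    (∀ x y, eFun G x y = ⨆ u ∈ G, (u y - u x)) ∧
    -- (e) representation formula, with +∞ absorbing
    (∀ f ∈ G, ∀ y, f y = ⨅ x ∈ {x | f x ≠ ⊤}, tadd (eFun G x y) (f x)) ∧
    -- (f) triangle inequality
    (∀ x x' x'' : X, eFun G x x'' ≤ tadd (eFun G x' x'') (eFun G x x')) := by
  refine ⟨fun x => ⟨eFun_mem hG.1 x, eFun_self hG.2 hprop x⟩,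
    fun x g hg h hh => eFun_inf_irreducible hG.2 hprop x hg hh,
    fun x x' hne => eFun_ne_add hG.2 hprop hsep hne,
    eFun_eq_iSup_sub hG.2,
    fun f hf => eq_iInf_tadd_eFun hG.2 hprop hf,
    eFun_le_tadd hG⟩
end

section
/- Let b : X × Y → [-∞,∞] be a kernel, B f(x) = sup_y (b(x,y) − f(y)) and B° h(y) = sup_x (b(x,y) − h(x)) with −∞ absorbing, and let G = Rg(B). Then for all x ∈ X and y ∈ Y: B° e_x (y) = b(x,y), and e_x = B(b(x,·)) = sup_{y ∈ Y} (b(·,y) − b(x,y)), where e_x = sup_{u ∈ G} (u(·) − u(x)). -/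
/-- The Fenchel–Moreau type conjugation `B f(x) = sup_y (b(x,y) − f(y))`. -/
noncomputable def Bop {X Y : Type*} (b : X → Y → EReal) (f : Y → EReal) : X → EReal :=
  fun x => ⨆ y, (b x y - f y)

/-- The transpose conjugation `B° h(y) = sup_x (b(x,y) − h(x))`. -/
noncomputable def BopT {X Y : Type*} (b : X → Y → EReal) (h : X → EReal) : Y → EReal :=
  fun y => ⨆ x, (b x y - h x)

/-- `Rg(B) = { sup_y (a_y + b(·,y)) | a_y ∈ [-∞,∞) }`. -/
def RgB {X Y : Type*} (b : X → Y → EReal) : Set (X → EReal) :=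
  {g | ∃ a : Y → EReal, (∀ y, a y ≠ ⊤) ∧ g = fun x => ⨆ y, (a y + b x y)}

/-- `e_x(z) = sup_{u ∈ Rg(B)} (u(z) − u(x))`. -/
noncomputable def eKer {X Y : Type*} (b : X → Y → EReal) (x : X) : X → EReal :=
  fun z => ⨆ u ∈ RgB b, (u z - u x)

/-!
The functions `u ∈ Rg(B)` are suprema of translates `a_y + b(·,y)` with `a_y < ∞`, so every
increment `u z − u x` is dominated by `sup_y (b(z,y) − b(x,y))`; conversely each section
`b(·,y)` lies in `Rg(B)` (take `a = 0` at `y` and `−∞` elsewhere). Hence `e_x = B(b(x,·))`.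
Then `B°e_x(y) ≤ b(x,y)` because `e_x(z) ≥ b(z,y) − b(x,y)`, and `B°e_x(y) ≥ b(x,y)` because
`e_x(x) ≤ 0`.
-/

namespace EReal

lemma sub_sub_cancel_le (c d : EReal) : c - (c - d) ≤ d := by
  induction c <;> induction d <;> simp_all [← coe_sub]

lemma iSup_sub_le {ι : Sort*} (f : ι → EReal) (c : EReal) :
    (⨆ i, f i) - c ≤ ⨆ i, (f i - c) := by
  induction c with
  | bot =>
    by_cases h : ∃ i, f i ≠ ⊥
    · obtain ⟨i, hi⟩ := h
      exact le_top.trans ((sub_bot hi) ▸ le_iSup (fun i => f i - ⊥) i)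
    · push Not at h
      simp [iSup_eq_bot.mpr h]
  | coe r =>
    refine sub_le_of_le_add (iSup_le fun i => ?_)
    calc f i = (f i - r) + r := sub_add_cancel.symm
      _ ≤ (⨆ i, (f i - r)) + r := add_le_add_left (le_iSup (fun i => f i - r) i) _
  | top => simp [sub_top]

lemma coe_add_sub_coe_add (r : ℝ) (c d : EReal) : ((r : EReal) + c) - (r + d) = c - d := by
  rw [add_sub_add_comm (Or.inl (coe_ne_bot r)) (Or.inl (coe_ne_top r)), ← coe_sub,
    _root_.sub_self, coe_zero, zero_add]

lemma add_sub_le_sub_of_add_le {a c d u : EReal} (ha : a ≠ ⊤) (h : a + d ≤ u) :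
    a + c - u ≤ c - d := by
  induction a with
  | bot => simp
  | coe r => exact (sub_le_sub le_rfl h).trans (coe_add_sub_coe_add r c d).le
  | top => exact absurd rfl ha

end EReal

section Kernel

variable {X Y : Type*} (b : X → Y → EReal)

lemma sub_le_iSup_sub_of_mem_RgB {u : X → EReal} (hu : u ∈ RgB b) (z x : X) :
    u z - u x ≤ ⨆ y, (b z y - b x y) := by
  obtain ⟨a, ha, rfl⟩ := hu
  refine (EReal.iSup_sub_le _ _).trans (iSup_mono fun y => ?_)
  exact EReal.add_sub_le_sub_of_add_le (ha y) (le_iSup (fun y' => a y' + b x y') y)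

lemma section_mem_RgB (y : Y) : (fun z => b z y) ∈ RgB b := by
  classical
  refine ⟨fun y' => if y' = y then 0 else ⊥, fun y' => by by_cases h : y' = y <;> simp [h], ?_⟩
  funext z
  refine le_antisymm (le_iSup_of_le y (by simp)) (iSup_le fun y' => ?_)
  by_cases h : y' = y <;> simp [h]

lemma eKer_eq_Bop (x : X) : eKer b x = Bop b (fun y => b x y) := by
  funext z
  refine le_antisymm (iSup₂_le fun u hu => sub_le_iSup_sub_of_mem_RgB b hu z x) ?_
  exact iSup_le fun y => le_iSup₂_of_le (fun z' => b z' y) (section_mem_RgB b y) le_rfl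

lemma BopT_Bop_section (x : X) (y : Y) : BopT b (Bop b (fun y' => b x y')) y = b x y := by
  apply le_antisymm
  · refine iSup_le fun z => ?_
    calc b z y - Bop b (fun y' => b x y') z ≤ b z y - (b z y - b x y) :=
          EReal.sub_le_sub le_rfl (le_iSup (fun y' => b z y' - b x y') y)
      _ ≤ b x y := EReal.sub_sub_cancel_le _ _
  · have hx : Bop b (fun y' => b x y') x ≤ 0 := iSup_le fun _ => EReal.sub_self_le_zero
    calc b x y = b x y - 0 := (sub_zero _).symm
      _ ≤ b x y - Bop b (fun y' => b x y') x := EReal.sub_le_sub le_rfl hx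
      _ ≤ BopT b (Bop b (fun y' => b x y')) y := le_iSup (fun z => b z y - _) x

end Kernel

theorem stmt7_general {X Y : Type*} (b : X → Y → EReal) :
    ∀ (x : X) (y : Y),
      BopT b (eKer b x) y = b x y ∧
      eKer b x = Bop b (fun y' => b x y') ∧
      eKer b x = fun z => ⨆ y', (b z y' - b x y') := by
  intro x y
  have he : eKer b x = Bop b (fun y' => b x y') := eKer_eq_Bop b x
  exact ⟨he ▸ BopT_Bop_section b x y, he, he⟩

theorem stmt7 {X Y : Type*} [Nonempty X] [Nonempty Y] (b : X → Y → EReal) :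
    ∀ (x : X) (y : Y),
      BopT b (eKer b x) y = b x y ∧
      eKer b x = Bop b (fun y' => b x y') ∧
      eKer b x = fun z => ⨆ y', (b z y' - b x y') :=
  stmt7_general b
end

section
/- Let G and F be proper, point-separating complete subspaces of [-∞,∞]^X and [-∞,∞]^Y, and let J : F → G be a (max,+)-isomorphism. If the Dirac functions δ^⊤_y (equal to 0 at y and +∞ elsewhere) belong to F for all y ∈ Y, and δ^⊤_x ∈ G for all x ∈ X, then there exist g : X → ℝ and a bijection φ : X → Y such that Jf(x) = g(x) + f(φ(x)) for all f ∈ F, x ∈ X. -/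
open scoped Classical

/-- `J` is a (max,+)-isomorphism from `F` onto `G` with inverse `J'`. -/
def MaxPlusIso {X Y : Type*} (F : Set (Y → EReal)) (G : Set (X → EReal))
    (J : (Y → EReal) → (X → EReal)) (J' : (X → EReal) → (Y → EReal)) : Prop :=
  (∀ f ∈ F, J f ∈ G) ∧ (∀ h ∈ G, J' h ∈ F) ∧
  (∀ f ∈ F, J' (J f) = f) ∧ (∀ h ∈ G, J (J' h) = h) ∧
  (∀ f ∈ F, ∀ f' ∈ F, J (f ⊔ f') = J f ⊔ J f') ∧
  (∀ f ∈ F, ∀ l : ℝ, J (fun y => f y + (l : EReal)) = fun x => J f x + (l : EReal))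

/-- The Dirac function `δ^⊤_x`: `0` at `x`, `+∞` elsewhere. -/
noncomputable def diracTop {X : Type*} (x : X) : X → EReal :=
  fun z => if z = x then (0 : EReal) else ⊤

section MyHelpers

private lemma my_ereal_le_coe_of_ne_top {a : EReal} (h : a ≠ ⊤) : ∃ c : ℝ, a ≤ (c : EReal) := by
  induction a using EReal.rec with
  | bot => exact ⟨0, bot_le⟩
  | coe t => exact ⟨t, le_rfl⟩
  | top => exact absurd rfl h

private lemma my_ereal_eq_bot (a : EReal) (h : ∀ c : ℝ, a ≤ (c : EReal)) : a = ⊥ := by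
  induction a using EReal.rec with
  | bot => rfl
  | coe t =>
      have := h (t - 1)
      rw [EReal.coe_le_coe_iff] at this
      linarith
  | top => exact absurd (h 0) (by simp)

private lemma my_ereal_le_of_forall {a b : EReal}
    (h : ∀ c : ℝ, b ≤ (c : EReal) → a ≤ (c : EReal)) : a ≤ b := by
  induction b using EReal.rec with
  | bot => rw [my_ereal_eq_bot a (fun c => h c bot_le)]
  | coe t => exact h t le_rfl
  | top => exact le_top

private lemma my_ereal_eq_of_forall {a b : EReal}
    (h : ∀ c : ℝ, a ≤ (c : EReal) ↔ b ≤ (c : EReal)) : a = b :=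
  le_antisymm (my_ereal_le_of_forall fun c hc => (h c).mpr hc)
    (my_ereal_le_of_forall fun c hc => (h c).mp hc)

private lemma my_ereal_add_shift (a : EReal) (d c : ℝ) :
    a ≤ ((d + c : ℝ) : EReal) ↔ ((-d : ℝ) : EReal) + a ≤ (c : EReal) := by
  induction a using EReal.rec with
  | bot => simp
  | coe t =>
      simp only [← EReal.coe_add, EReal.coe_le_coe_iff]
      constructor <;> intro <;> linarith
  | top =>
      rw [EReal.add_top_of_ne_bot (EReal.coe_ne_bot (-d))]
      simp [top_le_iff, ← EReal.coe_add]

private lemma my_sup_mem {X : Type*} {F : Set (X → EReal)} (hF : SupStable F)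
    {f g : X → EReal} (hf : f ∈ F) (hg : g ∈ F) : f ⊔ g ∈ F := by
  have h := hF {f, g} (by
    intro k hk
    rcases hk with rfl | rfl
    · exact hf
    · exact hg)
  convert h using 1
  funext x
  rw [iSup_pair]
  rfl

private lemma my_iso_le {X Y : Type*} {F : Set (Y → EReal)} {G : Set (X → EReal)}
    {J : (Y → EReal) → (X → EReal)} {J' : (X → EReal) → (Y → EReal)}
    (hF : CompleteSubspace F) (hJ : MaxPlusIso F G J J')
    {f : Y → EReal} {h : X → EReal} (hf : f ∈ F) (hh : h ∈ G) :
    J f ≤ h ↔ f ≤ J' h := by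
  obtain ⟨hJF, hJ'G, hJ'J, hJJ', hJsup, hJadd⟩ := hJ
  have hJ'h : J' h ∈ F := hJ'G h hh
  have hmem : f ⊔ J' h ∈ F := my_sup_mem hF.1 hf hJ'h
  constructor
  · intro hle
    have h1 : J (f ⊔ J' h) = h := by
      rw [hJsup f hf (J' h) hJ'h, hJJ' h hh]
      exact sup_eq_right.mpr hle
    have h2 : f ⊔ J' h = J' h := by
      have := congrArg J' h1
      rwa [hJ'J _ hmem] at this
    exact le_sup_left.trans h2.le
  · intro hle
    have h1 : f ⊔ J' h = J' h := sup_eq_right.mpr hle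
    have h2 := hJsup f hf (J' h) hJ'h
    rw [h1, hJJ' h hh] at h2
    exact sup_eq_right.mp h2.symm

private lemma my_iso_symm {X Y : Type*} {F : Set (Y → EReal)} {G : Set (X → EReal)}
    {J : (Y → EReal) → (X → EReal)} {J' : (X → EReal) → (Y → EReal)}
    (hF : CompleteSubspace F) (hJ : MaxPlusIso F G J J') :
    MaxPlusIso G F J' J := by
  obtain ⟨hJF, hJ'G, hJ'J, hJJ', hJsup, hJadd⟩ := hJ
  refine ⟨hJ'G, hJF, hJJ', hJ'J, ?_, ?_⟩
  · intro h hh h' hh'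
    have m1 := hJ'G h hh
    have m2 := hJ'G h' hh'
    have m3 : J' h ⊔ J' h' ∈ F := my_sup_mem hF.1 m1 m2
    have key : J (J' h ⊔ J' h') = h ⊔ h' := by
      rw [hJsup _ m1 _ m2, hJJ' h hh, hJJ' h' hh']
    calc J' (h ⊔ h') = J' (J (J' h ⊔ J' h')) := by rw [key]
      _ = J' h ⊔ J' h' := hJ'J _ m3
  · intro h hh l
    have m1 := hJ'G h hh
    have m2 : (fun y => J' h y + (l : EReal)) ∈ F := hF.2 _ m1 l
    have key : J (fun y => J' h y + (l : EReal)) = fun x => h x + (l : EReal) := by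
      rw [hJadd _ m1 l]
      funext x
      rw [hJJ' h hh]
    calc J' (fun x => h x + (l : EReal)) = J' (J (fun y => J' h y + (l : EReal))) := by rw [key]
      _ = _ := hJ'J _ m2

private lemma my_le_dirac_iff {X : Type*} (h : X → EReal) (x : X) (c : ℝ) :
    (h ≤ fun z => diracTop x z + (c : EReal)) ↔ h x ≤ (c : EReal) := by
  constructor
  · intro H
    have := H x
    simpa [diracTop] using this
  · intro H z
    by_cases hz : z = x
    · subst hz
      simpa [diracTop] using H
    · simp [diracTop, hz, EReal.top_add_coe]

private lemma my_dirac_of_chain {X : Type*} {F : Set (X → EReal)} (hF : CompleteSubspace F)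
    (hδ : ∀ x : X, diracTop x ∈ F) {h : X → EReal}
    (hchain : ∀ f₁ ∈ F, ∀ f₂ ∈ F, h ≤ f₁ → h ≤ f₂ → f₁ ≤ f₂ ∨ f₂ ≤ f₁)
    (hne : (fun z => h z + ((1 : ℝ) : EReal)) ≠ h) :
    ∃ (x : X) (c : ℝ), h = fun z => diracTop x z + (c : EReal) := by
  have hx : ∃ x, h x ≠ ⊤ := by
    by_contra hc
    push_neg at hc
    apply hne
    funext z
    rw [hc z]
    exact EReal.top_add_coe 1
  obtain ⟨x, hx⟩ := hx
  have huniq : ∀ z, z ≠ x → h z = ⊤ := by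
    intro z hz
    by_contra hzt
    obtain ⟨c, hc⟩ := my_ereal_le_coe_of_ne_top hx
    obtain ⟨c', hc'⟩ := my_ereal_le_coe_of_ne_top hzt
    have m1 : (fun w => diracTop x w + (c : EReal)) ∈ F := hF.2 _ (hδ x) c
    have m2 : (fun w => diracTop z w + (c' : EReal)) ∈ F := hF.2 _ (hδ z) c'
    have l1 : h ≤ fun w => diracTop x w + (c : EReal) := (my_le_dirac_iff h x c).mpr hc
    have l2 : h ≤ fun w => diracTop z w + (c' : EReal) := (my_le_dirac_iff h z c').mpr hc'
    rcases hchain _ m1 _ m2 l1 l2 with H | H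
    · have := H z
      simp [diracTop, hz, Ne.symm hz, EReal.top_add_coe, top_le_iff] at this
    · have := H x
      simp [diracTop, hz, Ne.symm hz, EReal.top_add_coe, top_le_iff] at this
  have hbot : h x ≠ ⊥ := by
    intro hb
    apply hne
    funext z
    by_cases hz : z = x
    · subst hz
      rw [hb]
      exact EReal.bot_add 1
    · rw [huniq z hz]
      exact EReal.top_add_coe 1
  refine ⟨x, (h x).toReal, ?_⟩
  funext z
  by_cases hz : z = x
  · subst hz
    have h0 : diracTop z z = (0 : EReal) := by simp [diracTop]
    rw [h0, zero_add]
    exact (EReal.coe_toReal hx hbot).symm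
  · rw [huniq z hz]
    simp [diracTop, hz, EReal.top_add_coe]

private lemma my_dirac_image {X Y : Type*} {F : Set (Y → EReal)} {G : Set (X → EReal)}
    {J : (Y → EReal) → (X → EReal)} {J' : (X → EReal) → (Y → EReal)}
    (hF : CompleteSubspace F) (hG : CompleteSubspace G)
    (hJ : MaxPlusIso F G J J') (hδF : ∀ y : Y, diracTop y ∈ F) (hδG : ∀ x : X, diracTop x ∈ G)
    (y : Y) : ∃ (x : X) (c : ℝ), J (diracTop y) = fun z => diracTop x z + (c : EReal) := by
  obtain ⟨hJF, hJ'G, hJ'J, hJJ', hJsup, hJadd⟩ := id hJ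
  apply my_dirac_of_chain hG hδG
  · intro h₁ hh₁ h₂ hh₂ l1 l2
    have d1 : diracTop y ≤ J' h₁ := (my_iso_le hF hJ (hδF y) hh₁).mp l1
    have d2 : diracTop y ≤ J' h₂ := (my_iso_le hF hJ (hδF y) hh₂).mp l2
    have top1 : ∀ w, w ≠ y → J' h₁ w = ⊤ := by
      intro w hw
      have := d1 w
      simpa [diracTop, hw, top_le_iff] using this
    have top2 : ∀ w, w ≠ y → J' h₂ w = ⊤ := by
      intro w hw
      have := d2 w
      simpa [diracTop, hw, top_le_iff] using this
    have comp : J' h₁ ≤ J' h₂ ∨ J' h₂ ≤ J' h₁ := by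
      rcases le_total (J' h₁ y) (J' h₂ y) with H | H
      · left
        intro w
        by_cases hw : w = y
        · subst hw; exact H
        · rw [top1 w hw, top2 w hw]
      · right
        intro w
        by_cases hw : w = y
        · subst hw; exact H
        · rw [top1 w hw, top2 w hw]
    rcases comp with H | H
    · left
      have := (my_iso_le hF hJ (hJ'G _ hh₁) hh₂).mpr H
      rwa [hJJ' _ hh₁] at this
    · right
      have := (my_iso_le hF hJ (hJ'G _ hh₂) hh₁).mpr H
      rwa [hJJ' _ hh₂] at this
  · intro heq
    have hmem := hJF _ (hδF y)
    have e1 := (my_iso_symm hF hJ).2.2.2.2.2 _ hmem 1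
    rw [heq, hJ'J _ (hδF y)] at e1
    have := congrFun e1 y
    simp [diracTop] at this

end MyHelpers
theorem stmt9 {X Y : Type*} (F : Set (Y → EReal)) (G : Set (X → EReal))
    (hF : CompleteSubspace F) (hG : CompleteSubspace G)
    (hFp : ProperAt F) (hFs : Separating F) (hGp : ProperAt G) (hGs : Separating G)
    (J : (Y → EReal) → (X → EReal)) (J' : (X → EReal) → (Y → EReal))
    (hJ : MaxPlusIso F G J J')
    (hδF : ∀ y : Y, diracTop y ∈ F) (hδG : ∀ x : X, diracTop x ∈ G) :
    ∃ (g : X → ℝ) (φ : X → Y), Function.Bijective φ ∧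
      ∀ f ∈ F, ∀ x, J f x = (g x : EReal) + f (φ x) := by
  obtain ⟨hJF, hJ'G, hJ'J, hJJ', hJsup, hJadd⟩ := id hJ
  have hsymm := my_iso_symm hF hJ
  have hτ' : ∀ x : X, ∃ (y : Y) (c : ℝ), J' (diracTop x) = fun z => diracTop y z + (c : EReal) :=
    fun x => my_dirac_image hG hF hsymm hδG hδF x
  choose τ d hτ using hτ'
  have hψ' : ∀ y : Y, ∃ (x : X) (c : ℝ), J (diracTop y) = fun z => diracTop x z + (c : EReal) :=
    fun y => my_dirac_image hF hG hJ hδF hδG y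
  choose ψ c hψ using hψ'
  have hψτ : ∀ x, ψ (τ x) = x := by
    intro x
    have e1 : J (J' (diracTop x)) = diracTop x := hJJ' _ (hδG x)
    rw [hτ x, hJadd _ (hδF (τ x)) (d x), hψ (τ x)] at e1
    by_contra hne
    have := congrFun e1 (ψ (τ x))
    simp only [diracTop, if_pos rfl, if_neg hne, zero_add, ← EReal.coe_add] at this
    exact EReal.coe_ne_top _ this
  have hτψ : ∀ y, τ (ψ y) = y := by
    intro y
    have e1 : J' (J (diracTop y)) = diracTop y := hJ'J _ (hδF y)
    rw [hψ y, hsymm.2.2.2.2.2 _ (hδG (ψ y)) (c y), hτ (ψ y)] at e1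
    by_contra hne
    have := congrFun e1 (τ (ψ y))
    simp only [diracTop, if_pos rfl, if_neg hne, zero_add, ← EReal.coe_add] at this
    exact EReal.coe_ne_top _ this
  refine ⟨fun x => -d x, τ, Function.bijective_iff_has_inverse.mpr ⟨ψ, hψτ, hτψ⟩, ?_⟩
  intro f hf x
  apply my_ereal_eq_of_forall
  intro e
  have m1 : (fun z => diracTop x z + (e : EReal)) ∈ G := hG.2 _ (hδG x) e
  have e3 : J' (fun z => diracTop x z + (e : EReal))
      = fun w => diracTop (τ x) w + ((d x + e : ℝ) : EReal) := by
    rw [hsymm.2.2.2.2.2 _ (hδG x) e, hτ x]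
    funext w
    rw [EReal.coe_add, ← add_assoc]
  rw [← my_le_dirac_iff (J f) x e, my_iso_le hF hJ hf m1, e3, my_le_dirac_iff]
  exact my_ereal_add_shift _ _ _
end

section
/- Every (max,+)-isomorphism J from F onto G, where F (resp. G) is the set of lower semicontinuous functions from a Hausdorff topological space Y (resp. X) to [-∞,∞], is of the form Jf(x) = g(x) + f(φ(x)) where g : X → ℝ is continuous and φ : X → Y is a homeomorphism. -/
namespace EReal

lemma eq_of_forall_le_coe_iff {u v : EReal} (h : ∀ t : ℝ, u ≤ t ↔ v ≤ t) : u = v :=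
  le_antisymm (le_of_forall_lt_iff_le.1 fun _ hz => (h _).2 hz.le)
    (le_of_forall_lt_iff_le.1 fun _ hz => (h _).1 hz.le)

lemma eq_add_coe_of_forall_le_iff {u v : EReal} {c : ℝ} (h : ∀ s : ℝ, u ≤ s ↔ v ≤ c + s) :
    v = u + c := by
  refine eq_of_forall_le_coe_iff fun t => ?_
  have hsub := h (t - c)
  rw [← coe_add, add_sub_cancel, coe_sub] at hsub
  rw [← hsub, le_sub_iff_add_le (.inl (coe_ne_bot c)) (.inl (coe_ne_top c))]

end EReal

section Semicontinuity

variable {X Y : Type*} [TopologicalSpace X] [TopologicalSpace Y]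

lemma LowerSemicontinuous.add_coe {f : Y → EReal} (hf : LowerSemicontinuous f) (l : ℝ) :
    LowerSemicontinuous fun y => f y + (l : EReal) :=
  hf.add' lowerSemicontinuous_const fun _ =>
    EReal.continuousAt_add (.inr (EReal.coe_ne_bot l)) (.inr (EReal.coe_ne_top l))

open Classical in
lemma IsOpen.lowerSemicontinuous_ite_top_bot {U : Set Y} (hU : IsOpen U) :
    LowerSemicontinuous fun y => if y ∈ U then (⊤ : EReal) else ⊥ := by
  intro y t ht
  by_cases hy : y ∈ U
  · filter_upwards [hU.mem_nhds hy] with z hz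
    simpa [hz, hy] using ht
  · simp [hy] at ht

lemma continuous_of_lowerSemicontinuous_add_comp {g : X → ℝ} {φ : X → Y}
    (h : ∀ f : Y → EReal, LowerSemicontinuous f →
      LowerSemicontinuous fun x => (g x : EReal) + f (φ x)) :
    Continuous φ := by
  classical
  refine continuous_def.2 fun U hU => ?_
  convert (h _ hU.lowerSemicontinuous_ite_top_bot).isOpen_preimage ⊥ using 1
  ext x
  by_cases hx : φ x ∈ U <;> simp [hx]

lemma continuous_of_lowerSemicontinuous_coe {g : X → ℝ}
    (hg : LowerSemicontinuous fun x => (g x : EReal))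
    (hg_neg : LowerSemicontinuous fun x => ((-g x : ℝ) : EReal)) : Continuous g := by
  refine EReal.continuous_coe_iff.1 (continuous_iff_lower_upperSemicontinuous.2 ⟨hg, ?_⟩)
  have := continuous_neg.comp_lowerSemicontinuous_antitone hg_neg EReal.neg_strictAnti.antitone
  simpa [Function.comp_def] using this

end Semicontinuity

open Classical in
noncomputable def peakFn {Y : Type*} (y : Y) (c : EReal) : Y → EReal :=
  Function.update ⊤ y c

section Peak

variable {Y : Type*}

@[simp] lemma peakFn_self (y : Y) (c : EReal) : peakFn y c y = c := by
  simp [peakFn]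

lemma peakFn_of_ne {y z : Y} (h : z ≠ y) (c : EReal) : peakFn y c z = ⊤ := by
  simp [peakFn, h]

lemma le_peakFn_iff {f : Y → EReal} {y : Y} {c : EReal} : f ≤ peakFn y c ↔ f y ≤ c := by
  simp [peakFn, le_update_iff]

lemma peakFn_add_coe (y : Y) (c : EReal) (l : ℝ) :
    (fun z => peakFn y c z + (l : EReal)) = peakFn y (c + l) := by
  funext z
  rcases eq_or_ne z y with rfl | hz
  · simp
  · simp [peakFn_of_ne hz]

lemma eq_of_peakFn_ne_top {y z : Y} {c : EReal} (h : peakFn y c z ≠ ⊤) : z = y :=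
  by_contra fun hz => h (peakFn_of_ne hz c)

lemma le_total_of_peakFn_le {y : Y} {c : EReal} {h₁ h₂ : Y → EReal}
    (h₁_le : peakFn y c ≤ h₁) (h₂_le : peakFn y c ≤ h₂) : h₁ ≤ h₂ ∨ h₂ ≤ h₁ := by
  have top_of_ne {h : Y → EReal} (hle : peakFn y c ≤ h) {z : Y} (hz : z ≠ y) : h z = ⊤ :=
    top_le_iff.1 (peakFn_of_ne hz c ▸ hle z)
  rcases le_total (h₁ y) (h₂ y) with hy | hy
  · refine .inl fun z => ?_
    rcases eq_or_ne z y with rfl | hz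
    · exact hy
    · simp [top_of_ne h₂_le hz]
  · refine .inr fun z => ?_
    rcases eq_or_ne z y with rfl | hz
    · exact hy
    · simp [top_of_ne h₁_le hz]

variable [TopologicalSpace Y]

lemma lowerSemicontinuous_peakFn [T1Space Y] (y : Y) (c : EReal) :
    LowerSemicontinuous (peakFn y c) := by
  intro z t ht
  rcases eq_or_ne z y with rfl | hz
  · refine .of_forall fun w => ht.trans_le ?_
    rcases eq_or_ne w z with rfl | hw
    · rfl
    · simp [peakFn_of_ne hw]
  · filter_upwards [isOpen_compl_singleton.mem_nhds hz] with w hw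
    rwa [peakFn_of_ne hw, ← peakFn_of_ne hz c]

lemma exists_eq_peakFn_of_le_total [T1Space Y] {h : Y → EReal} (hne : h ≠ ⊤)
    (hchain : ∀ h₁ h₂ : Y → EReal, LowerSemicontinuous h₁ → LowerSemicontinuous h₂ →
      h ≤ h₁ → h ≤ h₂ → h₁ ≤ h₂ ∨ h₂ ≤ h₁) :
    ∃ y, h y ≠ ⊤ ∧ h = peakFn y (h y) := by
  obtain ⟨y, hy⟩ : ∃ y, h y ≠ ⊤ := by simpa [funext_iff] using hne
  refine ⟨y, hy, funext fun z => ?_⟩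
  rcases eq_or_ne z y with rfl | hzy
  · simp
  rw [peakFn_of_ne hzy]
  by_contra hz
  have not_le {a b : Y} (hab : a ≠ b) (hb : h b ≠ ⊤) : ¬ peakFn a (h a) ≤ peakFn b (h b) := by
    rw [le_peakFn_iff, peakFn_of_ne hab.symm, top_le_iff]
    exact hb
  rcases hchain _ _ (lowerSemicontinuous_peakFn y (h y)) (lowerSemicontinuous_peakFn z (h z))
    (le_peakFn_iff.2 le_rfl) (le_peakFn_iff.2 le_rfl) with hle | hle
  · exact not_le hzy.symm hz hle
  · exact not_le hzy hy hle

end Peak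

namespace MaxPlusIso

section General

variable {X Y : Type*} {F : Set (Y → EReal)} {G : Set (X → EReal)}
  {J : (Y → EReal) → (X → EReal)} {J' : (X → EReal) → (Y → EReal)}

lemma symm (hJ : MaxPlusIso F G J J') (hF_sup : ∀ f ∈ F, ∀ f' ∈ F, f ⊔ f' ∈ F)
    (hF_add : ∀ f ∈ F, ∀ l : ℝ, (fun y => f y + (l : EReal)) ∈ F) :
    MaxPlusIso G F J' J := by
  obtain ⟨hJ_mem, hJ'_mem, hJ'J, hJJ', hJ_sup, hJ_add⟩ := hJ
  refine ⟨hJ'_mem, hJ_mem, hJJ', hJ'J, fun h hh h' hh' => ?_, fun h hh l => ?_⟩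
  · have hJ_eq : J (J' h ⊔ J' h') = h ⊔ h' := by
      rw [hJ_sup _ (hJ'_mem h hh) _ (hJ'_mem h' hh'), hJJ' h hh, hJJ' h' hh']
    rw [← hJ_eq, hJ'J _ (hF_sup _ (hJ'_mem h hh) _ (hJ'_mem h' hh'))]
  · have hJ_eq : J (fun y => J' h y + (l : EReal)) = fun x => h x + (l : EReal) := by
      rw [hJ_add _ (hJ'_mem h hh) l, hJJ' h hh]
    rw [← hJ_eq, hJ'J _ (hF_add _ (hJ'_mem h hh) l)]

lemma apply_le_apply_iff (hJ : MaxPlusIso F G J J') (hF_sup : ∀ f ∈ F, ∀ f' ∈ F, f ⊔ f' ∈ F)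
    {f f' : Y → EReal} (hf : f ∈ F) (hf' : f' ∈ F) : J f ≤ J f' ↔ f ≤ f' := by
  rw [← sup_eq_right, ← sup_eq_right, ← hJ.2.2.2.2.1 f hf f' hf']
  exact (Set.LeftInvOn.injOn hJ.2.2.1).eq_iff (hF_sup f hf f' hf') hf'

end General

section Semicontinuous

variable {X Y : Type*} [TopologicalSpace X] [TopologicalSpace Y]
  {J : (Y → EReal) → (X → EReal)} {J' : (X → EReal) → (Y → EReal)}

lemma symm_of_lowerSemicontinuous
    (hJ : MaxPlusIso {f : Y → EReal | LowerSemicontinuous f}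
      {h : X → EReal | LowerSemicontinuous h} J J') :
    MaxPlusIso {h : X → EReal | LowerSemicontinuous h}
      {f : Y → EReal | LowerSemicontinuous f} J' J :=
  hJ.symm (fun _ hf _ hf' => hf.sup hf') fun _ hf l => hf.add_coe l

variable (hJ : MaxPlusIso {f : Y → EReal | LowerSemicontinuous f}
  {h : X → EReal | LowerSemicontinuous h} J J')
include hJ

lemma apply_le_apply_iff_of_lowerSemicontinuous
    {f f' : Y → EReal} (hf : LowerSemicontinuous f) (hf' : LowerSemicontinuous f') :
    J f ≤ J f' ↔ f ≤ f' :=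
  hJ.apply_le_apply_iff (fun _ hf _ hf' => hf.sup hf') hf hf'

lemma apply_top : J ⊤ = ⊤ := by
  have h_le : J (J' ⊤) ≤ J ⊤ := (hJ.apply_le_apply_iff_of_lowerSemicontinuous
    (hJ.2.1 ⊤ lowerSemicontinuous_const) lowerSemicontinuous_const).2 le_top
  rw [hJ.2.2.2.1 ⊤ lowerSemicontinuous_const] at h_le
  exact top_le_iff.1 h_le

lemma apply_peakFn_add_coe [T1Space Y] (y : Y) (c : EReal) (l : ℝ) :
    J (peakFn y (c + l)) = fun x => J (peakFn y c) x + (l : EReal) := by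
  rw [← peakFn_add_coe]
  exact hJ.2.2.2.2.2 _ (lowerSemicontinuous_peakFn y c) l

lemma exists_apply_peakFn_zero [T1Space X] [T1Space Y] (y : Y) :
    ∃ (x : X) (r : ℝ), J (peakFn y 0) = peakFn x r := by
  have hJ' := hJ.symm_of_lowerSemicontinuous
  have hδ := lowerSemicontinuous_peakFn y (0 : EReal)
  have hJ_inj := Set.LeftInvOn.injOn hJ.2.2.1
  have hne : J (peakFn y 0) ≠ ⊤ := by
    rw [← hJ.apply_top]
    intro h
    have h_top : LowerSemicontinuous (⊤ : Y → EReal) := lowerSemicontinuous_const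
    have hy := congrFun (hJ_inj hδ h_top h) y
    rw [peakFn_self, Pi.top_apply] at hy
    exact EReal.zero_ne_top hy
  have peakFn_le_symm {h : X → EReal} (hh : LowerSemicontinuous h) (hle : J (peakFn y 0) ≤ h) :
      peakFn y 0 ≤ J' h := by
    rwa [← hJ'.apply_le_apply_iff_of_lowerSemicontinuous (hJ.1 _ hδ) hh, hJ.2.2.1 _ hδ] at hle
  obtain ⟨x, hx_top, hx⟩ := exists_eq_peakFn_of_le_total hne fun h₁ h₂ hh₁ hh₂ h₁_le h₂_le => by
    simpa only [hJ'.apply_le_apply_iff_of_lowerSemicontinuous hh₁ hh₂,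
      hJ'.apply_le_apply_iff_of_lowerSemicontinuous hh₂ hh₁] using
      le_total_of_peakFn_le (peakFn_le_symm hh₁ h₁_le) (peakFn_le_symm hh₂ h₂_le)
  set c := J (peakFn y 0) x
  have hx_bot : c ≠ ⊥ := by
    -- `peakFn x ⊥` is shift-invariant, so `J` would identify `peakFn y 1` with `peakFn y 0`
    intro hbot
    have h_shift : J (peakFn y ((0 : EReal) + (1 : ℝ))) = J (peakFn y 0) := by
      rw [hJ.apply_peakFn_add_coe, hx, peakFn_add_coe, hbot, EReal.bot_add]
    simpa using congrFun (hJ_inj (lowerSemicontinuous_peakFn _ _) hδ h_shift) y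
  exact ⟨x, c.toReal, by rw [hx, EReal.coe_toReal hx_top hx_bot]⟩

lemma exists_apply_eq_add [T1Space X] [T1Space Y] :
    ∃ (ψ : Y → X) (a : Y → ℝ),
      ∀ f : Y → EReal, LowerSemicontinuous f → ∀ y, J f (ψ y) = f y + (a y : EReal) := by
  choose ψ a hψ using hJ.exists_apply_peakFn_zero
  refine ⟨ψ, a, fun f hf y => EReal.eq_add_coe_of_forall_le_iff fun s => ?_⟩
  have hJ_peak : J (peakFn y s) = peakFn (ψ y) (a y + s) := by
    have h_shift := hJ.apply_peakFn_add_coe y 0 s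
    rw [zero_add] at h_shift
    rw [h_shift, hψ, peakFn_add_coe]
  rw [← le_peakFn_iff, ← hJ.apply_le_apply_iff_of_lowerSemicontinuous hf
    (lowerSemicontinuous_peakFn y s), hJ_peak, le_peakFn_iff]

lemma exists_apply_eq_add_comp [T1Space X] [T1Space Y] :
    ∃ (g : X → ℝ) (φ : X → Y),
      ∀ f : Y → EReal, LowerSemicontinuous f → ∀ x, J f x = (g x : EReal) + f (φ x) := by
  obtain ⟨φ, a, hφ⟩ := hJ.symm_of_lowerSemicontinuous.exists_apply_eq_add
  refine ⟨fun x => -a x, φ, fun f hf x => ?_⟩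
  rw [← hJ.2.2.1 f hf, hφ (J f) (hJ.1 f hf), hJ.2.2.1 f hf, add_comm, EReal.coe_neg,
    ← sub_eq_add_neg, EReal.add_sub_cancel_right]

lemma leftInverse_and_eq_neg_of_eq_add_comp [T1Space Y]
    {g : X → ℝ} {φ : X → Y} {g' : Y → ℝ} {φ' : Y → X}
    (hrep : ∀ f : Y → EReal, LowerSemicontinuous f → ∀ x, J f x = (g x : EReal) + f (φ x))
    (hrep' : ∀ h : X → EReal, LowerSemicontinuous h → ∀ y, J' h y = (g' y : EReal) + h (φ' y)) :
    Function.LeftInverse φ φ' ∧ ∀ y, g' y = -g (φ' y) := by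
  have hJ'J : ∀ f : Y → EReal, LowerSemicontinuous f →
      ∀ y, f y = (g' y : EReal) + ((g (φ' y) : EReal) + f (φ (φ' y))) := fun f hf y => by
    rw [← hrep f hf, ← hrep' _ (hJ.1 f hf), hJ.2.2.1 f hf]
  refine ⟨fun y => eq_of_peakFn_ne_top (c := 0) fun h_top => ?_, fun y => ?_⟩
  · have hy := hJ'J _ (lowerSemicontinuous_peakFn y 0) y
    rw [h_top, peakFn_self, EReal.add_top_of_ne_bot (EReal.coe_ne_bot _),
      EReal.add_top_of_ne_bot (EReal.coe_ne_bot _)] at hy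
    exact EReal.zero_ne_top hy
  · have hy := hJ'J 0 lowerSemicontinuous_const y
    simp only [Pi.zero_apply, add_zero] at hy
    exact eq_neg_of_add_eq_zero_left (by exact_mod_cast hy.symm)

section Representation

variable {g : X → ℝ} {φ : X → Y}
  (hrep : ∀ f : Y → EReal, LowerSemicontinuous f → ∀ x, J f x = (g x : EReal) + f (φ x))
include hrep

lemma lowerSemicontinuous_add_comp {f : Y → EReal} (hf : LowerSemicontinuous f) :
    LowerSemicontinuous fun x => (g x : EReal) + f (φ x) := by
  have hJf : LowerSemicontinuous (J f) := hJ.1 f hf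
  rwa [funext (hrep f hf)] at hJf

lemma continuous_of_eq_add_comp : Continuous φ :=
  continuous_of_lowerSemicontinuous_add_comp fun _ hf => hJ.lowerSemicontinuous_add_comp hrep hf

lemma lowerSemicontinuous_coe_of_eq_add_comp : LowerSemicontinuous fun x => (g x : EReal) := by
  simpa only [add_zero] using
    hJ.lowerSemicontinuous_add_comp hrep (f := fun _ => 0) lowerSemicontinuous_const

end Representation

end Semicontinuous

end MaxPlusIso

theorem stmt10 {X Y : Type*} [TopologicalSpace X] [TopologicalSpace Y]
    [T2Space X] [T2Space Y]
    (J : (Y → EReal) → (X → EReal)) (J' : (X → EReal) → (Y → EReal))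
    (hJ : MaxPlusIso {f : Y → EReal | LowerSemicontinuous f}
      {g : X → EReal | LowerSemicontinuous g} J J') :
    ∃ (g : X → ℝ) (φ : X ≃ₜ Y), Continuous g ∧
      ∀ f : Y → EReal, LowerSemicontinuous f →
        ∀ x, J f x = (g x : EReal) + f (φ x) := by
  have hJ' := hJ.symm_of_lowerSemicontinuous
  obtain ⟨g, φ, hrep⟩ := hJ.exists_apply_eq_add_comp
  obtain ⟨g', φ', hrep'⟩ := hJ'.exists_apply_eq_add_comp
  obtain ⟨hφφ', hg'⟩ := hJ.leftInverse_and_eq_neg_of_eq_add_comp hrep hrep'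
  obtain ⟨hφ'φ, -⟩ := hJ'.leftInverse_and_eq_neg_of_eq_add_comp hrep' hrep
  have hφ : Continuous φ := hJ.continuous_of_eq_add_comp hrep
  have hφ' : Continuous φ' := hJ'.continuous_of_eq_add_comp hrep'
  have hg : Continuous g := by
    refine continuous_of_lowerSemicontinuous_coe
      (hJ.lowerSemicontinuous_coe_of_eq_add_comp hrep) ?_
    have hg'φ := (hJ'.lowerSemicontinuous_coe_of_eq_add_comp hrep').comp hφ
    simpa only [Function.comp_def, hg', hφ'φ _] using hg'φ
  exact ⟨g, ⟨⟨φ, φ', hφ'φ, hφφ'⟩, hφ, hφ'⟩, hg, hrep⟩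
end

section
/- Let G (resp. F) be the space of lower semicontinuous functions from a Hausdorff topological space X (resp. Y) to [-∞,∞]. Then every order isomorphism J : F → G is of the form Jf(x) = g(x, f(φ(x))), where φ : X → Y is a homeomorphism and g : X × [-∞,∞] → [-∞,∞] is jointly lower semicontinuous with g(x,·) bijective and increasing for each x, whose pointwise inverse g¹(x,·) is also jointly lower semicontinuous in (x, t). -/
/-!
The functions `delta y t` (value `t ≠ ⊤` at `y`, `⊤` elsewhere) are exactly the
inf-irreducible elements of the lattice of lower semicontinuous functions on a Hausdorff
space, so an order isomorphism `e` permutes them: `e (delta y t) = delta (φ⁻¹ y) (g t)`.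
This yields the bijection `φ` and increasing bijections `g` of `[-∞, ∞]`. Since
`f ≤ delta y (f y)`, monotonicity gives `e f (φ⁻¹ y) ≤ g (f y)`, and the same argument for
`e⁻¹` gives equality. Closed sets are the zero sets `{F = ⊥}` of lower semicontinuous `F`,
and `e` maps them to zero sets, so `φ` is a homeomorphism. Finally `x ↦ g x t` is `e`
applied to the constant `t`, hence lower semicontinuous, and joint semicontinuity follows
because each `g x` is continuous.
-/

open Function Set Filter

theorem InfIrred.orderIso_apply {α β : Type*} [SemilatticeInf α] [SemilatticeInf β]
    {a : α} (ha : InfIrred a) (e : α ≃o β) : InfIrred (e a) := by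
  refine ⟨fun hmax => ha.1 (e.isMax_apply.1 hmax), fun b c hbc => ?_⟩
  have hsymm : e.symm b ⊓ e.symm c = a := by rw [← e.symm.map_inf, hbc, e.symm_apply_apply]
  rcases ha.2 hsymm with h | h
  · exact .inl (by rw [← h, e.apply_symm_apply])
  · exact .inr (by rw [← h, e.apply_symm_apply])

theorem LowerSemicontinuous.piecewise_top {X β : Type*} [TopologicalSpace X] [Preorder β]
    [OrderTop β] {f : X → β} (hf : LowerSemicontinuous f) {U : Set X}
    [∀ x, Decidable (x ∈ U)] (hU : IsOpen U) : LowerSemicontinuous (U.piecewise ⊤ f) := by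
  intro x c hc
  by_cases hx : x ∈ U
  · rw [piecewise_eq_of_mem _ _ _ hx] at hc
    filter_upwards [hU.mem_nhds hx] with z hz
    rwa [piecewise_eq_of_mem _ _ _ hz]
  · rw [piecewise_eq_of_notMem _ _ _ hx] at hc
    filter_upwards [hf x c hc] with z hz
    exact hz.trans_le (by by_cases hzU : z ∈ U <;> simp [hzU])

theorem lowerSemicontinuous_update_top {X β : Type*} [TopologicalSpace X] [T1Space X]
    [Preorder β] [OrderTop β] [DecidableEq X] (x : X) (t : β) :
    LowerSemicontinuous (update (⊤ : X → β) x t) := by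
  have h : update (⊤ : X → β) x t = ({x}ᶜ : Set X).piecewise ⊤ fun _ => t := by
    ext z
    by_cases hz : z = x <;> simp [hz]
  rw [h]
  exact lowerSemicontinuous_const.piecewise_top isOpen_compl_singleton

theorem lowerSemicontinuous_uncurry_of_orderIso {X α β : Type*} [TopologicalSpace X]
    [LinearOrder α] [DenselyOrdered α] [TopologicalSpace α] [OrderTopology α] [Preorder β]
    {g : X → α ≃o β} (hg : ∀ t, LowerSemicontinuous fun x => g x t) :
    LowerSemicontinuous fun p : X × α => g p.1 p.2 := by
  rintro ⟨x, t⟩ c hc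
  obtain ⟨t', ht'c, ht't⟩ := exists_between ((g x).symm_apply_lt.2 hc)
  have hct' : c < g x t' := (g x).symm_apply_lt.1 ht'c
  rw [nhds_prod_eq]
  filter_upwards [prod_mem_prod (hg t' x c hct') (Ioi_mem_nhds ht't)] with p ⟨hp₁, hp₂⟩
  exact hp₁.trans_le ((g p.1).monotone (le_of_lt hp₂))

abbrev LSCFun (X : Type*) [TopologicalSpace X] := {f : X → EReal // LowerSemicontinuous f}

namespace LSCFun

noncomputable section

variable {X Y : Type*} [TopologicalSpace X] [TopologicalSpace Y]

instance : CoeFun (LSCFun X) fun _ => X → EReal := ⟨Subtype.val⟩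

instance : SemilatticeInf (LSCFun X) := Subtype.semilatticeInf fun _ _ hf hg => hf.inf hg

instance : OrderTop (LSCFun X) := Subtype.orderTop lowerSemicontinuous_const

theorem le_def {F G : LSCFun X} : F ≤ G ↔ ∀ x, F x ≤ G x := Iff.rfl

@[simp] theorem inf_apply (F G : LSCFun X) (x : X) : (F ⊓ G) x = F x ⊓ G x := rfl

@[simp] theorem top_apply (x : X) : (⊤ : LSCFun X) x = ⊤ := rfl

@[ext] theorem ext {F G : LSCFun X} (h : ∀ x, F x = G x) : F = G := Subtype.ext (funext h)

section T1

variable [T1Space X]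

open Classical in
/-- The function `δ^⊤_x + t` of the paper. -/
def delta (x : X) (t : EReal) : LSCFun X := ⟨update ⊤ x t, lowerSemicontinuous_update_top x t⟩

@[simp] theorem delta_apply_self (x : X) (t : EReal) : delta x t x = t := by
  simp [delta]

theorem delta_apply_of_ne {x z : X} (h : z ≠ x) (t : EReal) : delta x t z = ⊤ := by
  simp [delta, h]

@[simp] theorem delta_top (x : X) : delta x ⊤ = ⊤ := by
  ext z
  rcases eq_or_ne z x with rfl | h
  · simp
  · simp [delta_apply_of_ne h]

theorem le_delta_iff {F : LSCFun X} {x : X} {t : EReal} : F ≤ delta x t ↔ F x ≤ t := by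
  change (F : X → EReal) ≤ delta x t ↔ _
  simp [delta, le_update_iff]

theorem delta_mono (x : X) : Monotone (delta x) := fun _ _ h =>
  le_delta_iff.2 ((delta_apply_self x _).trans_le h)

theorem eq_of_delta_le {x x' : X} {s s' : EReal} (hs' : s' ≠ ⊤)
    (h : delta x s ≤ delta x' s') : x = x' := by
  by_contra hne
  have h' := le_delta_iff.1 h
  rw [delta_apply_of_ne (Ne.symm hne)] at h'
  exact hs' (top_le_iff.1 h')

theorem infIrred_delta (x : X) {t : EReal} (ht : t ≠ ⊤) : InfIrred (delta x t) := by
  refine ⟨fun hmax => ht ?_, fun G H hGH => ?_⟩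
  · rw [← delta_apply_self x t, isMax_iff_eq_top.1 hmax, top_apply]
  have hx : min (G x) (H x) = t := by rw [← inf_apply, hGH, delta_apply_self]
  rcases min_choice (G x) (H x) with h | h
  · exact .inl (le_antisymm (le_delta_iff.2 (h ▸ hx).le) (hGH ▸ inf_le_left))
  · exact .inr (le_antisymm (le_delta_iff.2 (h ▸ hx).le) (hGH ▸ inf_le_right))

end T1

variable [T2Space X]

/-- Splitting `F` along disjoint neighbourhoods of two of its finite points writes it as
the infimum of two strictly larger functions. -/
theorem eq_of_infIrred {F : LSCFun X} (hF : InfIrred F) {x z : X} (hx : F x ≠ ⊤)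
    (hz : F z ≠ ⊤) : x = z := by
  classical
  by_contra hne
  obtain ⟨U, V, hU, hV, hxU, hzV, hUV⟩ := t2_separation hne
  let G : LSCFun X := ⟨U.piecewise ⊤ F, F.2.piecewise_top hU⟩
  let H : LSCFun X := ⟨V.piecewise ⊤ F, F.2.piecewise_top hV⟩
  have hGH : G ⊓ H = F := by
    ext w
    by_cases hwU : w ∈ U
    · simp [G, H, hwU, disjoint_left.1 hUV hwU]
    · by_cases hwV : w ∈ V <;> simp [G, H, hwU, hwV]
  rcases hF.2 hGH with h | h
  · exact hx (by rw [← h]; simp [G, hxU])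
  · exact hz (by rw [← h]; simp [H, hzV])

theorem infIrred_iff {F : LSCFun X} : InfIrred F ↔ ∃ x t, t ≠ ⊤ ∧ F = delta x t := by
  refine ⟨fun hF => ?_, fun ⟨x, t, ht, hF⟩ => hF ▸ infIrred_delta x ht⟩
  obtain ⟨x, hx⟩ : ∃ x, F x ≠ ⊤ := by
    by_contra! h
    exact hF.ne_top (ext h)
  refine ⟨x, F x, hx, ext fun z => ?_⟩
  rcases eq_or_ne z x with rfl | hzx
  · rw [delta_apply_self]
  · rw [delta_apply_of_ne hzx]
    by_contra hz
    exact hzx (eq_of_infIrred hF hz hx)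

variable [T2Space Y] (e : LSCFun Y ≃o LSCFun X)

theorem exists_apply_delta_eq (y : Y) : ∃ x, ∀ t, ∃ s, e (delta y t) = delta x s := by
  have hirr : ∀ t ≠ ⊤, ∃ x s, s ≠ ⊤ ∧ e (delta y t) = delta x s := fun t ht =>
    infIrred_iff.1 ((infIrred_iff.2 ⟨y, t, ht, rfl⟩).orderIso_apply e)
  obtain ⟨x, s, -, hx⟩ := hirr ⊥ bot_ne_top
  refine ⟨x, fun t => ?_⟩
  rcases eq_or_ne t ⊤ with rfl | ht
  · exact ⟨⊤, by rw [delta_top, delta_top, e.map_top]⟩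
  obtain ⟨x', s', hs', hx'⟩ := hirr t ht
  have hle : delta x s ≤ delta x' s' := hx ▸ hx' ▸ e.monotone (delta_mono y bot_le)
  exact ⟨s', by rw [hx', eq_of_delta_le hs' hle]⟩

def basePoint (y : Y) : X := (exists_apply_delta_eq e y).choose

def fiber (y : Y) (t : EReal) : EReal := e (delta y t) (basePoint e y)

theorem apply_delta (y : Y) (t : EReal) :
    e (delta y t) = delta (basePoint e y) (fiber e y t) := by
  obtain ⟨s, hs⟩ : ∃ s, e (delta y t) = delta (basePoint e y) s :=
    (exists_apply_delta_eq e y).choose_spec t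
  rw [fiber, hs, delta_apply_self]

theorem symm_apply_delta_fiber (y : Y) (t : EReal) :
    e.symm (delta (basePoint e y) (fiber e y t)) = delta y t := by
  rw [← apply_delta, e.symm_apply_apply]

theorem basePoint_symm_basePoint (y : Y) : basePoint e.symm (basePoint e y) = y := by
  have h := symm_apply_delta_fiber e y ⊥
  rw [apply_delta] at h
  exact eq_of_delta_le bot_ne_top h.le

theorem fiber_symm_fiber (y : Y) (t : EReal) :
    fiber e.symm (basePoint e y) (fiber e y t) = t := by
  have h := congrArg (fun F : LSCFun Y => F y) (symm_apply_delta_fiber e y t)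
  simpa only [apply_delta, basePoint_symm_basePoint, delta_apply_self] using h

theorem basePoint_basePoint_symm (x : X) : basePoint e (basePoint e.symm x) = x :=
  basePoint_symm_basePoint e.symm x

def basePointEquiv : Y ≃ X where
  toFun := basePoint e
  invFun := basePoint e.symm
  left_inv := basePoint_symm_basePoint e
  right_inv := basePoint_basePoint_symm e

def fiberIso (y : Y) : EReal ≃o EReal :=
  Equiv.toOrderIso
    { toFun := fiber e y
      invFun := fiber e.symm (basePoint e y)
      left_inv := fiber_symm_fiber e y
      right_inv := fun t => by
        simpa only [OrderIso.symm_symm, basePoint_symm_basePoint] using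
          fiber_symm_fiber e.symm (basePoint e y) t }
    (fun _ _ h => e.monotone (delta_mono y h) (basePoint e y))
    (fun _ _ h => e.symm.monotone (delta_mono _ h) _)

@[simp] theorem fiberIso_apply (y : Y) (t : EReal) : fiberIso e y t = fiber e y t := rfl

theorem coe_fiberIso_symm (y : Y) : ⇑(fiberIso e y).symm = fiberIso e.symm (basePoint e y) :=
  rfl

theorem apply_basePoint_le (F : LSCFun Y) (y : Y) :
    e F (basePoint e y) ≤ fiberIso e y (F y) := by
  have h := e.monotone (le_delta_iff.2 le_rfl : F ≤ delta y (F y))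
  rw [apply_delta] at h
  simpa using le_def.1 h (basePoint e y)

theorem apply_basePoint (F : LSCFun Y) (y : Y) : e F (basePoint e y) = fiberIso e y (F y) := by
  refine le_antisymm (apply_basePoint_le e F y) ((fiberIso e y).le_symm_apply.1 ?_)
  have h := apply_basePoint_le e.symm (e F) (basePoint e y)
  rwa [e.symm_apply_apply, basePoint_symm_basePoint, ← coe_fiberIso_symm] at h

theorem continuous_basePointEquiv_symm : Continuous (basePointEquiv e).symm := by
  classical
  refine continuous_iff_isClosed.2 fun C hC => ?_
  let F : LSCFun Y :=
    ⟨Cᶜ.piecewise ⊤ ⊥, lowerSemicontinuous_const.piecewise_top hC.isOpen_compl⟩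
  have hpre : (basePointEquiv e).symm ⁻¹' C = e F ⁻¹' Iic ⊥ := by
    ext x
    obtain ⟨y, rfl⟩ := (basePointEquiv e).surjective x
    change _ ∈ C ↔ e F (basePoint e y) ≤ ⊥
    rw [Equiv.symm_apply_apply, apply_basePoint, ← (fiberIso e y).map_bot,
      (fiberIso e y).le_iff_le]
    by_cases hy : y ∈ C <;> simp [F, hy]
  rw [hpre]
  exact (e F).2.isClosed_preimage ⊥

def basePointHomeomorph : Y ≃ₜ X where
  toEquiv := basePointEquiv e
  continuous_toFun := continuous_basePointEquiv_symm e.symm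
  continuous_invFun := continuous_basePointEquiv_symm e

@[simp] theorem coe_basePointHomeomorph_symm :
    ⇑(basePointHomeomorph e).symm = basePoint e.symm :=
  rfl

theorem lowerSemicontinuous_fiberIso_apply (t : EReal) :
    LowerSemicontinuous fun y => fiberIso e y t := by
  let c : LSCFun Y := ⟨fun _ => t, lowerSemicontinuous_const⟩
  have h : (fun y => fiberIso e y t) = e c ∘ basePoint e :=
    funext fun y => (apply_basePoint e c y).symm
  rw [h]
  exact (e _).2.comp (basePointHomeomorph e).continuous

theorem coe_fiberIso_basePoint_symm_symm (x : X) :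
    ⇑(fiberIso e (basePoint e.symm x)).symm = fiberIso e.symm x := by
  rw [coe_fiberIso_symm, basePoint_basePoint_symm]

end

end LSCFun

theorem stmt11 {X Y : Type*} [TopologicalSpace X] [TopologicalSpace Y]
    [T2Space X] [T2Space Y]
    (J : (Y → EReal) → (X → EReal)) (J' : (X → EReal) → (Y → EReal))
    -- J is an order isomorphism between the lsc functions on Y and those on X
    (hJF : ∀ f : Y → EReal, LowerSemicontinuous f → LowerSemicontinuous (J f))
    (hJ'G : ∀ h : X → EReal, LowerSemicontinuous h → LowerSemicontinuous (J' h))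
    (hJJ' : ∀ f : Y → EReal, LowerSemicontinuous f → J' (J f) = f)
    (hJ'J : ∀ h : X → EReal, LowerSemicontinuous h → J (J' h) = h)
    (hmono : ∀ f g : Y → EReal, LowerSemicontinuous f → LowerSemicontinuous g →
      f ≤ g → J f ≤ J g)
    (hmono' : ∀ f g : X → EReal, LowerSemicontinuous f → LowerSemicontinuous g →
      f ≤ g → J' f ≤ J' g) :
    ∃ (φ : X ≃ₜ Y) (g g1 : X → EReal → EReal),
      LowerSemicontinuous (fun p : X × EReal => g p.1 p.2) ∧
      LowerSemicontinuous (fun p : X × EReal => g1 p.1 p.2) ∧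
      (∀ x, Monotone (g x) ∧ Function.Bijective (g x)) ∧
      (∀ x t, g1 x (g x t) = t ∧ g x (g1 x t) = t) ∧
      ∀ f : Y → EReal, LowerSemicontinuous f → ∀ x, J f x = g x (f (φ x)) := by
  let e : LSCFun Y ≃o LSCFun X := Equiv.toOrderIso
    { toFun := fun f => ⟨J f, hJF f f.2⟩
      invFun := fun h => ⟨J' h, hJ'G h h.2⟩
      left_inv := fun f => Subtype.ext (hJJ' f f.2)
      right_inv := fun h => Subtype.ext (hJ'J h h.2) }
    (fun f g hfg => hmono f g f.2 g.2 hfg) (fun f g hfg => hmono' f g f.2 g.2 hfg)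
  let φ := (LSCFun.basePointHomeomorph e).symm
  let g x := LSCFun.fiberIso e (φ x)
  refine ⟨φ, fun x => g x, fun x => (g x).symm, ?_, ?_,
    fun x => ⟨(g x).monotone, (g x).bijective⟩,
    fun x t => ⟨(g x).symm_apply_apply t, (g x).apply_symm_apply t⟩, fun f hf x => ?_⟩
  · exact lowerSemicontinuous_uncurry_of_orderIso fun t =>
      (LSCFun.lowerSemicontinuous_fiberIso_apply e t).comp φ.continuous
  · refine lowerSemicontinuous_uncurry_of_orderIso (g := fun x => (g x).symm) fun t => ?_
    simp only [g, φ, LSCFun.coe_basePointHomeomorph_symm,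
      LSCFun.coe_fiberIso_basePoint_symm_symm]
    exact LSCFun.lowerSemicontinuous_fiberIso_apply e.symm t
  · have h := LSCFun.apply_basePoint e ⟨f, hf⟩ (φ x)
    rwa [LSCFun.coe_basePointHomeomorph_symm, LSCFun.basePoint_basePoint_symm] at h
end

section
/- Let (X, δ) be a set with a weak metric whose symmetrization δ_s(x,y) = δ(x,y) + δ(y,x) is a metric, and fix a basepoint x̄. Assume either that all closed balls of (X, δ_s) are compact, or that δ = δ_s/2 and (X, δ_s) is complete. If h is a Busemann point (a horofunction that is the limit of ι(x_α) for an almost-geodesic net x_α, where ι(x)(y) = δ(y,x) − δ(x̄,x)), then δ_s(x̄, x_α) → ∞ for any such almost-geodesic net, and there is no constant a ∈ ℝ such that h ≥ a + δ(·, x̄). -/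
/-!
The functions `horoMap δ xb x` depend 1-Lipschitzly on `x` for the symmetrized metric, so if the
almost-geodesic `x_α` had a cluster point `z`, the limit `h` of `horoMap δ xb (x_α)` would be
`horoMap δ xb z`, which is not a horofunction. Bounded parts of `x_α` do have cluster points:
by compactness of balls in the first case; in the second case `dist xb (x_α)` is almost
nondecreasing, hence eventually nearly constant once it is frequently bounded, and then the
almost-geodesic inequality makes `x_α` Cauchy. Finally, along an almost-geodesic
`h (x_α) ≤ ε - δ xb (x_α)`, so `h ≥ c + δ(·, xb)` would bound `dist xb (x_α)`.
-/

open Filter Topology Set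

section

variable {X ι : Type*}

/-- The map `ι` of the paper: `horoMap δ xb x y = δ(y, x) - δ(xb, x)`. -/
def horoMap (δ : X → X → ℝ) (xb x : X) : X → ℝ := fun y => δ y x - δ xb x

def IsAlmostGeodesic [Preorder ι] (δ : X → X → ℝ) (xb : X) (x : ι → X) : Prop :=
  ∀ ε > 0, ∀ᶠ a in atTop, ∀ b, a ≤ b → δ xb (x a) + δ (x a) (x b) - ε ≤ δ xb (x b)

section horoMap

variable [PseudoMetricSpace X] {δ : X → X → ℝ}

theorem horoMap_le_add_dist (htri : ∀ x y z : X, δ x z ≤ δ x y + δ y z)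
    (hsym : ∀ x y : X, dist x y = δ x y + δ y x) (xb x x' y : X) :
    horoMap δ xb x y ≤ horoMap δ xb x' y + dist x x' := by
  unfold horoMap
  linarith [htri y x' x, htri xb x x', hsym x x']

theorem continuous_horoMap (htri : ∀ x y z : X, δ x z ≤ δ x y + δ y z)
    (hsym : ∀ x y : X, dist x y = δ x y + δ y x) (xb : X) : Continuous (horoMap δ xb) :=
  continuous_pi fun y =>
    (LipschitzWith.of_le_add fun x x' => horoMap_le_add_dist htri hsym xb x x' y).continuous

theorem eq_horoMap_of_mapClusterPt (htri : ∀ x y z : X, δ x z ≤ δ x y + δ y z)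
    (hsym : ∀ x y : X, dist x y = δ x y + δ y x) {xb : X} {F : Filter ι} {x : ι → X}
    {h : X → ℝ} (hlim : Tendsto (fun a => horoMap δ xb (x a)) F (𝓝 h)) {z : X}
    (hz : MapClusterPt z F x) : h = horoMap δ xb z := by
  have hclus := hz.continuousAt_comp (continuous_horoMap htri hsym xb).continuousAt
  exact (eq_of_nhds_neBot (hclus.neBot.mono (inf_le_inf_left _ hlim))).symm

end horoMap

theorem IsAlmostGeodesic.of_eq_half_dist [Preorder ι] [PseudoMetricSpace X] {δ : X → X → ℝ}
    (hδ : ∀ x y : X, δ x y = dist x y / 2) {xb : X} {x : ι → X}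
    (hx : IsAlmostGeodesic δ xb x) : IsAlmostGeodesic dist xb x := fun ε hε =>
  (hx (ε / 2) (half_pos hε)).mono fun a ha b hab => by
    have := ha b hab
    rw [hδ, hδ, hδ] at this
    linarith

section Directed

variable [Nonempty ι] [SemilatticeSup ι]

theorem cauchySeq_of_almost_monotone {r : ι → ℝ} {R : ℝ}
    (hmono : ∀ ε > 0, ∀ᶠ a in atTop, ∀ b, a ≤ b → r a ≤ r b + ε)
    (hbdd : ∃ᶠ a in atTop, r a ≤ R) : CauchySeq r := by
  rw [Metric.cauchySeq_iff']
  intro ε hε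
  obtain ⟨A, hA⟩ := eventually_atTop.1 ((hmono 1 one_pos).and (hmono (ε / 2) (half_pos hε)))
  have hbddA : BddAbove (r '' Ici A) := by
    refine ⟨R + 1, forall_mem_image.2 fun a ha => ?_⟩
    obtain ⟨b, hab, hb⟩ := frequently_atTop.1 hbdd a
    linarith [(hA a ha).1 b hab]
  -- `N` nearly realizes the supremum of the tail, so `r` stays within `ε / 2` of `r N` after it
  obtain ⟨_, ⟨N, hN, rfl⟩, hNsup⟩ := exists_lt_of_lt_csSup (s := r '' Ici A)
    (Set.image_nonempty.2 nonempty_Ici) (sub_lt_self _ (half_pos hε))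
  refine ⟨N, fun n hn => ?_⟩
  have hup : r n ≤ sSup (r '' Ici A) := le_csSup hbddA (mem_image_of_mem r (le_trans hN hn))
  have hlow := (hA N hN).2 n hn
  rw [Real.dist_eq, abs_lt]
  constructor <;> linarith

theorem IsAlmostGeodesic.cauchySeq [PseudoMetricSpace X] {xb : X} {x : ι → X} {R : ℝ}
    (hx : IsAlmostGeodesic dist xb x) (hbdd : ∃ᶠ a in atTop, dist xb (x a) ≤ R) :
    CauchySeq x := by
  have hr : CauchySeq fun a => dist xb (x a) :=
    cauchySeq_of_almost_monotone (fun ε hε => (hx ε hε).mono fun a ha b hab => by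
      linarith [ha b hab, dist_nonneg (x := x a) (y := x b)]) hbdd
  rw [Metric.cauchySeq_iff'] at hr ⊢
  intro ε hε
  obtain ⟨N, hN⟩ := hr (ε / 4) (by positivity)
  obtain ⟨A, hA⟩ := eventually_atTop.1 (hx (ε / 4) (by positivity))
  refine ⟨N ⊔ A, fun n hn => ?_⟩
  have hgeo := hA (N ⊔ A) le_sup_right n hn
  have hn' := hN n (le_trans le_sup_left hn)
  have hNA := hN (N ⊔ A) le_sup_left
  rw [Real.dist_eq, abs_lt] at hn' hNA
  rw [dist_comm]
  linarith [hn'.2, hNA.1]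

theorem IsAlmostGeodesic.eventually_le {δ : X → X → ℝ} {xb : X} {x : ι → X}
    (hx : IsAlmostGeodesic δ xb x) {h : X → ℝ}
    (hlim : Tendsto (fun a => horoMap δ xb (x a)) atTop (𝓝 h)) {ε : ℝ} (hε : 0 < ε) :
    ∀ᶠ a in atTop, h (x a) ≤ ε - δ xb (x a) :=
  (hx ε hε).mono fun a ha => le_of_tendsto (tendsto_pi_nhds.1 hlim (x a))
    ((eventually_ge_atTop a).mono fun b hb => by
      have := ha b hb
      simp only [horoMap]
      linarith)

end Directed

end

theorem stmt15 {X : Type*} [MetricSpace X] {ι : Type*} [Nonempty ι] [SemilatticeSup ι]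
    (δ : X → X → ℝ)
    -- δ is a weak metric whose symmetrization is the metric of X
    (htri : ∀ x y z : X, δ x z ≤ δ x y + δ y z)
    (hsym : ∀ x y : X, dist x y = δ x y + δ y x)
    -- either all closed balls of (X, δ_s) are compact, or δ = δ_s/2 and (X, δ_s) complete
    (hcase : (∀ (x : X) (r : ℝ), IsCompact (Metric.closedBall x r)) ∨
      ((∀ x y : X, δ x y = dist x y / 2) ∧ CompleteSpace X))
    (xb : X) (h : X → ℝ)
    -- h is a horofunction: not of the form ι(x) = δ(·,x) − δ(x̄,x)
    (hhoro : ¬ ∃ x : X, h = fun y => δ y x - δ xb x)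
    -- (x_α) is an almost-geodesic net
    (xa : ι → X)
    (halmost : ∀ ε > (0 : ℝ), ∃ A : ι, ∀ a b : ι, A ≤ a → a ≤ b →
      δ xb (xa a) + δ (xa a) (xa b) - ε ≤ δ xb (xa b))
    -- converging pointwise to h (so h is a Busemann point)
    (hconv : ∀ y : X, Tendsto (fun a => δ y (xa a) - δ xb (xa a)) atTop (nhds (h y))) :
    -- then δ_s(x̄, x_α) → ∞ and no constant a with h ≥ a + δ(·, x̄)
    Tendsto (fun a => dist xb (xa a)) atTop atTop ∧
    ¬ ∃ c : ℝ, ∀ y : X, c + δ y xb ≤ h y := by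
  have hgeo : IsAlmostGeodesic δ xb xa := fun ε hε =>
    eventually_atTop.2 ((halmost ε hε).imp fun A hA a ha b hab => hA a b ha hab)
  have hlim : Tendsto (fun a => horoMap δ xb (xa a)) atTop (𝓝 h) := tendsto_pi_nhds.2 hconv
  have hunbdd : Tendsto (fun a => dist xb (xa a)) atTop atTop := by
    refine tendsto_atTop.2 fun R => not_not.1 fun hR => ?_
    have hfreq : ∃ᶠ a in atTop, dist xb (xa a) ≤ R :=
      (not_eventually.1 hR).mono fun a ha => (not_le.1 ha).le
    obtain ⟨z, hz⟩ : ∃ z, MapClusterPt z atTop xa := by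
      rcases hcase with hcompact | ⟨hδ, _⟩
      · obtain ⟨z, -, hz⟩ := (hcompact xb R).exists_mapClusterPt_of_frequently
          (hfreq.mono fun a ha => by rwa [Metric.mem_closedBall, dist_comm])
        exact ⟨z, hz⟩
      · obtain ⟨z, hz⟩ := cauchySeq_tendsto_of_complete ((hgeo.of_eq_half_dist hδ).cauchySeq hfreq)
        exact ⟨z, hz.mapClusterPt⟩
    exact hhoro ⟨z, eq_horoMap_of_mapClusterPt htri hsym hlim hz⟩
  refine ⟨hunbdd, fun ⟨c, hc⟩ => ?_⟩
  obtain ⟨a, hha, hfar⟩ :=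
    ((hgeo.eventually_le hlim one_pos).and (hunbdd.eventually_gt_atTop (1 - c))).exists
  linarith [hc (xa a), hsym xb (xa a)]
end

section
/- Let G (resp. F) be the set of 1-Lipschitz real functions on a complete metric space (X, d) (resp. (Y, d')). Then every (max,+)-anti-isomorphism J from F onto G (bijection, order reversing with order reversing inverse, satisfying J(f + λ) = Jf − λ) is of the form Jf(x) = α − f(φ(x)) for some constant α ∈ ℝ and an isometry φ : X → Y. -/
namespace Stmt17

variable {X : Type*} [MetricSpace X]

lemma lip1_of {f : X → ℝ} (h : ∀ a b, f a ≤ f b + dist a b) : LipschitzWith 1 f := by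
  apply LipschitzWith.of_dist_le_mul
  intro a b
  rw [Real.dist_eq, NNReal.coe_one, one_mul, abs_le]
  constructor
  · have h1 := h b a
    have h2 : dist b a = dist a b := dist_comm b a
    linarith
  · have h1 := h a b
    linarith

lemma lip1_apply {f : X → ℝ} (h : LipschitzWith 1 f) (a b : X) : f a ≤ f b + dist a b := by
  have h1 := (lipschitzWith_iff_dist_le_mul.mp h) a b
  rw [Real.dist_eq, NNReal.coe_one, one_mul] at h1
  have h2 := (abs_le.mp h1).2
  linarith

lemma lip_neg {f : X → ℝ} (hf : LipschitzWith 1 f) : LipschitzWith 1 (fun x => -f x) :=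
  lip1_of fun a b => by
    have h1 := lip1_apply hf b a
    have h2 : dist b a = dist a b := dist_comm b a
    linarith

lemma lip_add_const {f : X → ℝ} (hf : LipschitzWith 1 f) (l : ℝ) :
    LipschitzWith 1 (fun x => f x + l) :=
  lip1_of fun a b => by have := lip1_apply hf a b; linarith

lemma lip_max {f g : X → ℝ} (hf : LipschitzWith 1 f) (hg : LipschitzWith 1 g) :
    LipschitzWith 1 (fun x => max (f x) (g x)) :=
  lip1_of fun a b => by
    apply max_le
    · have := lip1_apply hf a b
      have := le_max_left (f b) (g b)
      linarith
    · have := lip1_apply hg a b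
      have := le_max_right (f b) (g b)
      linarith

/-- The peak function `c - d(·, y)`. -/
def pk (y : X) (c : ℝ) : X → ℝ := fun x => c - dist x y

lemma lip_pk (y : X) (c : ℝ) : LipschitzWith 1 (pk y c) :=
  lip1_of fun a b => by
    simp only [pk]
    have h := abs_le.mp (abs_dist_sub_le b a y)
    have h2 : dist b a = dist a b := dist_comm b a
    linarith [h.2]

lemma pk_self (y : X) (c : ℝ) : pk y c y = c := by simp [pk]

lemma pk_le_iff {f : X → ℝ} (hf : LipschitzWith 1 f) (y : X) (c : ℝ) :
    (∀ x, pk y c x ≤ f x) ↔ c ≤ f y := by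
  constructor
  · intro h
    have := h y
    rwa [pk_self] at this
  · intro h x
    have h2 := lip1_apply hf y x
    have h3 : dist y x = dist x y := dist_comm y x
    simp only [pk]
    linarith

lemma pk_le_pk_iff (a a' : X) (c c' l : ℝ) :
    (∀ x, pk a c x ≤ pk a' c' x + l) ↔ c + dist a a' ≤ c' + l := by
  constructor
  · intro h
    have := h a
    simp only [pk, dist_self] at this
    have h2 : dist a a' = dist a a' := rfl
    linarith
  · intro h x
    simp only [pk]
    have := dist_triangle x a a'
    linarith

lemma pk_inj {a a' : X} {c c' : ℝ} (h : pk a c = pk a' c') : a = a' ∧ c = c' := by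
  have h1 : ∀ x, pk a c x ≤ pk a' c' x + 0 := fun x => by rw [h]; simp
  have h2 : ∀ x, pk a' c' x ≤ pk a c x + 0 := fun x => by rw [h]; simp
  rw [pk_le_pk_iff] at h1 h2
  have hcm : dist a' a = dist a a' := dist_comm a' a
  have hd0 : (0:ℝ) ≤ dist a a' := dist_nonneg
  have hd : dist a a' = 0 := by linarith
  refine ⟨dist_eq_zero.mp hd, by linarith⟩

def IsPrime (g : X → ℝ) : Prop :=
  LipschitzWith 1 g ∧ ∀ f₁ f₂ : X → ℝ, LipschitzWith 1 f₁ → LipschitzWith 1 f₂ →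
    (∀ x, g x ≤ max (f₁ x) (f₂ x)) → (∀ x, g x ≤ f₁ x) ∨ (∀ x, g x ≤ f₂ x)

def IsTame (g : X → ℝ) : Prop :=
  ∀ f : X → ℝ, LipschitzWith 1 f → ∃ l : ℝ, ∀ x, g x ≤ f x + l

lemma pk_prime (y : X) (c : ℝ) : IsPrime (pk y c) := by
  refine ⟨lip_pk y c, ?_⟩
  intro f₁ f₂ h1 h2 hcov
  have hy := hcov y
  rw [pk_self] at hy
  rcases le_max_iff.mp hy with h | h
  · exact Or.inl ((pk_le_iff h1 y c).mpr h)
  · exact Or.inr ((pk_le_iff h2 y c).mpr h)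

lemma pk_tame (y : X) (c : ℝ) : IsTame (pk y c) := by
  intro f hf
  refine ⟨c - f y, fun x => ?_⟩
  have h1 := lip1_apply hf y x
  have h2 : dist y x = dist x y := dist_comm y x
  simp only [pk]
  linarith


lemma lip_const {Z : Type*} [MetricSpace Z] (c : ℝ) : LipschitzWith 1 (fun _ : Z => c) :=
  lip1_of fun a b => by have := dist_nonneg (x := a) (y := b); linarith

/-- Key consequence of primality. -/
lemma primeA {g : X → ℝ} (hg : IsPrime g) (y : X) (ε η : ℝ) (hη : 0 < η)
    (hex : ∃ x₀, g y + ε < g x₀ + dist x₀ y) :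
    ∃ x, g y + ε ≤ g x + dist x y ∧ g y - η ≤ g x - dist x y := by
  obtain ⟨x₀, hx₀⟩ := hex
  set A : Set X := {x | g y + ε ≤ g x + dist x y} with hA
  have hx₀A : x₀ ∈ A := le_of_lt hx₀
  set f₂ : X → ℝ := fun z => sSup ((fun x => g x - dist z x) '' A) with hf₂
  have hbdd : ∀ z, ∀ v ∈ (fun x => g x - dist z x) '' A, v ≤ g z := by
    rintro z v ⟨x, hx, rfl⟩
    dsimp only
    have h1 := lip1_apply hg.1 x z
    have h2 : dist z x = dist x z := dist_comm z x
    linarith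
  have hne : ∀ z, ((fun x => g x - dist z x) '' A).Nonempty :=
    fun z => ⟨_, Set.mem_image_of_mem _ hx₀A⟩
  have hBdd : ∀ z, BddAbove ((fun x => g x - dist z x) '' A) :=
    fun z => ⟨g z, fun v hv => hbdd z v hv⟩
  have hf₂ge : ∀ z, z ∈ A → g z ≤ f₂ z := by
    intro z hz
    have h1 : g z - dist z z ∈ (fun x => g x - dist z x) '' A := Set.mem_image_of_mem _ hz
    have h2 := le_csSup (hBdd z) h1
    simpa using h2
  have hf₂lip : LipschitzWith 1 f₂ := by
    apply lip1_of
    intro a b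
    apply csSup_le (hne a)
    rintro v ⟨x, hx, rfl⟩
    dsimp only
    have h1 : g x - dist b x ≤ f₂ b := le_csSup (hBdd b) (Set.mem_image_of_mem _ hx)
    have h2 := abs_le.mp (abs_dist_sub_le b a x)
    have h3 : dist b a = dist a b := dist_comm b a
    linarith [h2.2]
  have hcov : ∀ z, g z ≤ max (pk y (g y + ε) z) (f₂ z) := by
    intro z
    by_cases h : g y + ε ≤ g z + dist z y
    · exact le_max_of_le_right (hf₂ge z h)
    · push_neg at h
      apply le_max_of_le_left
      simp only [pk]
      linarith
  have hnot : ¬ ∀ x, g x ≤ pk y (g y + ε) x := by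
    intro h
    have := h x₀
    simp only [pk] at this
    linarith
  rcases hg.2 _ _ (lip_pk _ _) hf₂lip hcov with h | h
  · exact absurd h hnot
  · have hy : g y ≤ f₂ y := h y
    have hlt : g y - η < sSup ((fun x => g x - dist y x) '' A) := lt_of_lt_of_le (by linarith) hy
    obtain ⟨v, ⟨x, hxA, rfl⟩, hv⟩ := exists_lt_of_lt_csSup (hne y) hlt
    dsimp only at hv
    refine ⟨x, hxA, ?_⟩
    have h3 : dist y x = dist x y := dist_comm y x
    linarith

theorem peak_of_tame_prime [CompleteSpace X] [Nonempty X] {g : X → ℝ}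
    (hg : IsPrime g) (ht : IsTame g) : ∃ y c, g = pk y c := by
  obtain ⟨l, hl⟩ := ht (fun x => -g x) (lip_neg hg.1)
  set M := l / 2 with hM
  have hgM : ∀ x, g x ≤ M := fun x => by have := hl x; simp only [hM]; linarith
  have hSbdd : ∀ y, BddAbove (Set.range (fun x => g x + dist x y)) := by
    intro y
    by_contra hb
    have hex : ∀ ε : ℝ, ∃ x₀, g y + ε < g x₀ + dist x₀ y := by
      intro ε
      by_contra hc
      push_neg at hc
      exact hb ⟨g y + ε, by rintro v ⟨x, rfl⟩; exact hc x⟩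
    obtain ⟨x, h1, h2⟩ := primeA hg y (2 * (M - g y) + 3) 1 one_pos (hex _)
    have := hgM x
    linarith
  set S : X → ℝ := fun y => sSup (Set.range (fun x => g x + dist x y)) with hS
  have hSge : ∀ y x, g x + dist x y ≤ S y := fun y x => le_csSup (hSbdd y) ⟨x, rfl⟩
  have hSgy : ∀ y, g y ≤ S y := fun y => by have := hSge y y; simpa using this
  have hSlip : ∀ a b, S a ≤ S b + dist a b := by
    intro a b
    apply csSup_le (Set.range_nonempty _)
    rintro v ⟨x, rfl⟩
    dsimp only
    have h1 := hSge b x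
    have h2 := dist_triangle x b a
    have h3 : dist b a = dist a b := dist_comm b a
    linarith
  suffices hpeak : ∃ y, S y ≤ g y by
    obtain ⟨y, hy⟩ := hpeak
    refine ⟨y, g y, funext fun x => ?_⟩
    have h1 := hSge y x
    have h2 := lip1_apply hg.1 y x
    have h3 : dist y x = dist x y := dist_comm y x
    simp only [pk]
    linarith
  by_contra hno
  push_neg at hno
  have hstep : ∀ y : X, ∃ x,
      (g y + (S y - g y)/2 ≤ g x + dist x y) ∧ (g y - (S y - g y)/16 ≤ g x - dist x y) := by
    intro y
    have hΔ : 0 < S y - g y := by linarith [hno y]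
    apply primeA hg y _ _ (by linarith : (0:ℝ) < (S y - g y)/16)
    have hlt : g y + (S y - g y)/2 < S y := by linarith
    obtain ⟨v, ⟨x, rfl⟩, hv⟩ := exists_lt_of_lt_csSup (Set.range_nonempty _) hlt
    dsimp only at hv
    exact ⟨x, hv⟩
  choose F hF1 hF2 using hstep
  set u : ℕ → X := fun n => F^[n] (Classical.arbitrary X) with hu
  have hu_succ : ∀ n, u (n+1) = F (u n) := fun n => Function.iterate_succ_apply' F n _
  set v : ℕ → ℝ := fun n => g (u n) with hv
  have hkey : ∀ n, v n + (7/32) * (S (u n) - g (u n)) ≤ v (n+1) ∧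
      dist (u n) (u (n+1)) ≤ 2 * (v (n+1) - v n) := by
    intro n
    have h1 := hF1 (u n)
    have h2 := hF2 (u n)
    rw [← hu_succ n] at h1 h2
    have hΔ : 0 < S (u n) - g (u n) := by linarith [hno (u n)]
    have hdc : dist (u (n+1)) (u n) = dist (u n) (u (n+1)) := dist_comm _ _
    constructor
    · simp only [hv]; linarith
    · simp only [hv]; linarith
  have hmono : Monotone v := monotone_nat_of_le_succ (fun n => by
    have h1 := (hkey n).1
    have hΔ : 0 < S (u n) - g (u n) := by linarith [hno (u n)]
    linarith)
  have hvbdd : BddAbove (Set.range v) := ⟨M, by rintro _ ⟨n, rfl⟩; exact hgM _⟩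
  have hvle : ∀ n, v n ≤ ⨆ n, v n := fun n => le_ciSup hvbdd n
  have hvtend : Filter.Tendsto v Filter.atTop (nhds (⨆ n, v n)) :=
    tendsto_atTop_ciSup hmono hvbdd
  set Lv := ⨆ n, v n with hLv
  have htel : ∀ n m, n ≤ m → dist (u n) (u m) ≤ 2 * (v m - v n) := by
    intro n m h
    induction m, h using Nat.le_induction with
    | base => simp
    | succ m hm ih =>
      have h1 := dist_triangle (u n) (u m) (u (m+1))
      have h2 := (hkey m).2
      linarith
  have hcauchy : CauchySeq u := by
    apply cauchySeq_of_le_tendsto_0 (fun N => 2 * (Lv - v N))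
    · intro n m N hn hm
      rcases le_total n m with h | h
      · have := htel n m h
        linarith [hvle m, hmono hn]
      · rw [dist_comm]
        linarith [htel m n h, hvle n, hmono hm]
    · have h1 : Filter.Tendsto (fun N => 2 * (Lv - v N)) Filter.atTop (nhds (2 * (Lv - Lv))) :=
        (tendsto_const_nhds.sub hvtend).const_mul 2
      simpa using h1
  obtain ⟨yl, hyl⟩ := cauchySeq_tendsto_of_complete hcauchy
  have hΔl : 0 < S yl - g yl := by linarith [hno yl]
  obtain ⟨N1, hN1⟩ := Metric.tendsto_atTop.mp hyl ((S yl - g yl)/8) (by linarith)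
  have hdiff : Filter.Tendsto (fun n => v (n+1) - v n) Filter.atTop (nhds 0) := by
    have h1 : Filter.Tendsto (fun n => v (n+1)) Filter.atTop (nhds Lv) :=
      hvtend.comp (Filter.tendsto_add_atTop_nat 1)
    simpa using h1.sub hvtend
  obtain ⟨N2, hN2⟩ := Metric.tendsto_atTop.mp hdiff ((7/32) * ((S yl - g yl)/4)) (by linarith)
  set n := max N1 N2 with hn
  have h1 := hN1 n (le_max_left _ _)
  have h2 := hN2 n (le_max_right _ _)
  rw [Real.dist_eq, sub_zero, abs_lt] at h2
  have hΔn : S (u n) - g (u n) ≤ (32/7) * (v (n+1) - v n) := by linarith [(hkey n).1]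
  have e1 := hSlip yl (u n)
  have e2 := lip1_apply hg.1 (u n) yl
  have dc : dist yl (u n) = dist (u n) yl := dist_comm _ _
  linarith [h2.2]


variable {Y : Type*} [MetricSpace Y]

structure GoodPair (T : (Y → ℝ) → (X → ℝ)) (T' : (X → ℝ) → (Y → ℝ)) : Prop where
  lipT : ∀ f, LipschitzWith 1 f → LipschitzWith 1 (T f)
  lipT' : ∀ h, LipschitzWith 1 h → LipschitzWith 1 (T' h)
  inv1 : ∀ f, LipschitzWith 1 f → T' (T f) = f
  inv2 : ∀ h, LipschitzWith 1 h → T (T' h) = h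
  mono : ∀ f g, LipschitzWith 1 f → LipschitzWith 1 g → (∀ y, f y ≤ g y) → ∀ x, T f x ≤ T g x
  mono' : ∀ f g, LipschitzWith 1 f → LipschitzWith 1 g → (∀ x, f x ≤ g x) → ∀ y, T' f y ≤ T' g y
  scal : ∀ f, LipschitzWith 1 f → ∀ l : ℝ, T (fun y => f y + l) = fun x => T f x + l

variable {T : (Y → ℝ) → (X → ℝ)} {T' : (X → ℝ) → (Y → ℝ)}

lemma GoodPair.scal' (gp : GoodPair T T') :
    ∀ h, LipschitzWith 1 h → ∀ l : ℝ, T' (fun x => h x + l) = fun y => T' h y + l := by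
  intro h hh l
  have h1 : T (fun y => T' h y + l) = fun x => h x + l := by
    rw [gp.scal _ (gp.lipT' h hh) l, gp.inv2 h hh]
  have h2 := gp.inv1 _ (lip_add_const (gp.lipT' h hh) l)
  rw [h1] at h2
  exact h2

lemma GoodPair.symm (gp : GoodPair T T') : GoodPair T' T :=
  ⟨gp.lipT', gp.lipT, gp.inv2, gp.inv1, gp.mono', gp.mono, gp.scal'⟩

lemma GoodPair.le_iff (gp : GoodPair T T') {f g : Y → ℝ}
    (hf : LipschitzWith 1 f) (hg : LipschitzWith 1 g) (l : ℝ) :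
    (∀ y, f y ≤ g y + l) ↔ (∀ x, T f x ≤ T g x + l) := by
  constructor
  · intro h x
    have h1 := gp.mono f (fun y => g y + l) hf (lip_add_const hg l) h x
    rw [gp.scal g hg l] at h1
    exact h1
  · intro h y
    have hTf := gp.lipT f hf
    have hTg := gp.lipT g hg
    have h1 := gp.mono' (T f) (fun x => T g x + l) hTf (lip_add_const hTg l) h y
    rw [gp.scal' (T g) hTg l] at h1
    rw [gp.inv1 f hf, gp.inv1 g hg] at h1
    exact h1


lemma GoodPair.tame (gp : GoodPair T T') {p : Y → ℝ} (hp : LipschitzWith 1 p)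
    (ht : IsTame p) : IsTame (T p) := by
  intro h hh
  obtain ⟨l, hl⟩ := ht (T' h) (gp.lipT' h hh)
  refine ⟨l, fun x => ?_⟩
  have h1 := (gp.le_iff hp (gp.lipT' h hh) l).mp hl x
  rwa [gp.inv2 h hh] at h1

lemma GoodPair.prime (gp : GoodPair T T') {p : Y → ℝ} (hp : IsPrime p) : IsPrime (T p) := by
  refine ⟨gp.lipT p hp.1, ?_⟩
  intro f₁ f₂ h1 h2 hcov
  have hg₁ := gp.lipT' f₁ h1
  have hg₂ := gp.lipT' f₂ h2
  have hmax : LipschitzWith 1 (fun y => max (T' f₁ y) (T' f₂ y)) := lip_max hg₁ hg₂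
  have hTmax_ge : ∀ x, max (f₁ x) (f₂ x) ≤ T (fun y => max (T' f₁ y) (T' f₂ y)) x := by
    intro x
    have a1 := gp.mono (T' f₁) _ hg₁ hmax (fun y => le_max_left _ _) x
    have a2 := gp.mono (T' f₂) _ hg₂ hmax (fun y => le_max_right _ _) x
    rw [gp.inv2 f₁ h1] at a1
    rw [gp.inv2 f₂ h2] at a2
    exact max_le a1 a2
  have hcov' : ∀ y, p y ≤ max (T' f₁ y) (T' f₂ y) := by
    intro y
    have hstep : ∀ x, T p x ≤ T (fun y => max (T' f₁ y) (T' f₂ y)) x :=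
      fun x => (hcov x).trans (hTmax_ge x)
    have h3 := gp.mono' (T p) _ (gp.lipT p hp.1) (gp.lipT _ hmax) hstep y
    rw [gp.inv1 p hp.1, gp.inv1 _ hmax] at h3
    exact h3
  rcases hp.2 _ _ hg₁ hg₂ hcov' with h | h
  · left
    intro x
    have h4 := gp.mono p (T' f₁) hp.1 hg₁ h x
    rwa [gp.inv2 f₁ h1] at h4
  · right
    intro x
    have h4 := gp.mono p (T' f₂) hp.1 hg₂ h x
    rwa [gp.inv2 f₂ h2] at h4

theorem Tmain [CompleteSpace X] [CompleteSpace Y] (gp : GoodPair T T') :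
    ∃ (α : ℝ) (φ : X → Y), Isometry φ ∧ Function.Bijective φ ∧
      ∀ f : Y → ℝ, LipschitzWith 1 f → ∀ x, T f x = α + f (φ x) := by
  by_cases hX : Nonempty X
  case neg =>
    have hXe : IsEmpty X := not_nonempty_iff.mp hX
    have hYe : IsEmpty Y := by
      by_contra hY
      obtain ⟨y⟩ := not_isEmpty_iff.mp hY
      have h0 := lip_const (Z := Y) 0
      have h1 := lip_const (Z := Y) 1
      have he : T (fun _ => (0:ℝ)) = T (fun _ => (1:ℝ)) := funext fun x => hXe.elim x
      have e2 : (fun _ : Y => (0:ℝ)) = (fun _ => (1:ℝ)) := by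
        calc (fun _ : Y => (0:ℝ)) = T' (T (fun _ => 0)) := (gp.inv1 _ h0).symm
          _ = T' (T (fun _ => 1)) := by rw [he]
          _ = (fun _ => (1:ℝ)) := gp.inv1 _ h1
      have := congrFun e2 y
      norm_num at this
    refine ⟨0, fun x => hXe.elim x, ?_, ?_, ?_⟩
    · intro x1 x2
      exact hXe.elim x1
    · constructor
      · intro a b _
        exact hXe.elim a
      · intro y
        exact hYe.elim y
    · intro f hf x
      exact hXe.elim x
  case pos =>
    have hY : Nonempty Y := by
      by_contra hY
      have hYe : IsEmpty Y := not_nonempty_iff.mp hY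
      obtain ⟨x⟩ := hX
      have h0 := lip_const (Z := X) 0
      have h1 := lip_const (Z := X) 1
      have he : T' (fun _ => (0:ℝ)) = T' (fun _ => (1:ℝ)) := funext fun y => hYe.elim y
      have e2 : (fun _ : X => (0:ℝ)) = (fun _ => (1:ℝ)) := by
        calc (fun _ : X => (0:ℝ)) = T (T' (fun _ => 0)) := (gp.inv2 _ h0).symm
          _ = T (T' (fun _ => 1)) := by rw [he]
          _ = (fun _ => (1:ℝ)) := gp.inv2 _ h1
      have := congrFun e2 x
      norm_num at this
    haveI := hX
    haveI := hY
    have hpeakX : ∀ y : Y, ∃ (a : X) (b : ℝ), T (pk y 0) = pk a b := fun y =>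
      peak_of_tame_prime (gp.prime (pk_prime y 0)) (gp.tame (lip_pk y 0) (pk_tame y 0))
    choose φ β hφ using hpeakX
    have hTpk : ∀ y c, T (pk y c) = pk (φ y) (β y + c) := by
      intro y c
      have e : pk y c = fun t => pk y 0 t + c := funext fun t => by simp only [pk]; ring
      rw [e, gp.scal _ (lip_pk y 0) c, hφ y]
      funext x
      simp [pk]
      ring
    have hthresh : ∀ y y' : Y, dist y y' = β y - β y' + dist (φ y) (φ y') := by
      intro y y'
      have key : ∀ l : ℝ, dist y y' ≤ l ↔ β y + dist (φ y) (φ y') ≤ β y' + l := by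
        intro l
        have h1 := pk_le_pk_iff y y' 0 0 l
        have h2 := gp.le_iff (lip_pk y 0) (lip_pk y' 0) l
        have h3 := pk_le_pk_iff (φ y) (φ y') (β y) (β y') l
        constructor
        · intro h
          have h4 := h2.mp (h1.mpr (by linarith))
          rw [hφ y, hφ y'] at h4
          exact h3.mp h4
        · intro h
          have h4 := h3.mpr h
          rw [← hφ y, ← hφ y'] at h4
          have h5 := h1.mp (h2.mpr h4)
          linarith
      have a1 := (key (dist y y')).mp le_rfl
      have a2 := (key (β y - β y' + dist (φ y) (φ y'))).mpr (by linarith)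
      linarith
    have hiso : ∀ y y', dist (φ y) (φ y') = dist y y' := by
      intro y y'
      have h1 := hthresh y y'
      have h2 := hthresh y' y
      have c1 : dist y' y = dist y y' := dist_comm y' y
      have c2 : dist (φ y') (φ y) = dist (φ y) (φ y') := dist_comm _ _
      linarith
    have hβ : ∀ y y', β y = β y' := by
      intro y y'
      have h1 := hthresh y y'
      have h2 := hthresh y' y
      have c1 : dist y' y = dist y y' := dist_comm y' y
      have c2 : dist (φ y') (φ y) = dist (φ y) (φ y') := dist_comm _ _
      linarith
    obtain ⟨y₀⟩ := hY
    have hform : ∀ f, LipschitzWith 1 f → ∀ y, T f (φ y) = β y₀ + f y := by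
      intro f hf y
      have hαy : β y = β y₀ := hβ y y₀
      have hge : β y₀ + f y ≤ T f (φ y) := by
        have h1 : ∀ t, pk y (f y) t ≤ f t := (pk_le_iff hf y (f y)).mpr le_rfl
        have h2 := gp.mono _ f (lip_pk y (f y)) hf h1
        have h3 : ∀ x, pk (φ y) (β y + f y) x ≤ T f x := by
          intro x
          rw [← hTpk y (f y)]
          exact h2 x
        have h4 := (pk_le_iff (gp.lipT f hf) (φ y) (β y + f y)).mp h3
        linarith
      have hle : T f (φ y) ≤ β y₀ + f y := by
        have h1 : ∀ x, pk (φ y) (T f (φ y)) x ≤ T f x :=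
          (pk_le_iff (gp.lipT f hf) (φ y) (T f (φ y))).mpr le_rfl
        have h2 : ∀ x, T (pk y (T f (φ y) - β y)) x ≤ T f x := by
          intro x
          rw [hTpk y (T f (φ y) - β y)]
          have e : β y + (T f (φ y) - β y) = T f (φ y) := by ring
          rw [e]
          exact h1 x
        have h3 := gp.mono' _ _ (gp.lipT _ (lip_pk y (T f (φ y) - β y))) (gp.lipT f hf) h2
        have h4 : ∀ t, pk y (T f (φ y) - β y) t ≤ f t := by
          intro t
          have h5 := h3 t
          rw [gp.inv1 _ (lip_pk y (T f (φ y) - β y)), gp.inv1 f hf] at h5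
          exact h5
        have h6 := (pk_le_iff hf y (T f (φ y) - β y)).mp h4
        linarith
      linarith
    have hpeakY : ∀ x : X, ∃ (b : Y) (c : ℝ), T' (pk x 0) = pk b c := fun x =>
      peak_of_tame_prime (gp.symm.prime (pk_prime x 0)) (gp.symm.tame (lip_pk x 0) (pk_tame x 0))
    choose ψ γ hψ using hpeakY
    have hψφ : ∀ y, ψ (φ y) = y := by
      intro y
      have h1 : T' (T (pk y 0)) = pk y 0 := gp.inv1 _ (lip_pk y 0)
      rw [hφ y] at h1
      have e : pk (φ y) (β y) = fun t => pk (φ y) 0 t + β y := funext fun t => by simp only [pk]; ring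
      rw [e, gp.scal' _ (lip_pk (φ y) 0) (β y), hψ (φ y)] at h1
      have e2 : (fun t => pk (ψ (φ y)) (γ (φ y)) t + β y)
          = pk (ψ (φ y)) (γ (φ y) + β y) := funext fun t => by simp only [pk]; ring
      rw [e2] at h1
      exact (pk_inj h1).1
    have hφψ : ∀ x, φ (ψ x) = x := by
      intro x
      have h1 : T (T' (pk x 0)) = pk x 0 := gp.inv2 _ (lip_pk x 0)
      rw [hψ x, hTpk (ψ x) (γ x)] at h1
      exact (pk_inj h1).1
    refine ⟨β y₀, ψ, ?_, ?_, ?_⟩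
    · apply Isometry.of_dist_eq
      intro a b
      have h1 := hiso (ψ a) (ψ b)
      rw [hφψ a, hφψ b] at h1
      exact h1.symm
    · exact ⟨fun a b h => by rw [← hφψ a, ← hφψ b, h], fun y => ⟨φ y, hψφ y⟩⟩
    · intro f hf x
      have h1 := hform f hf (ψ x)
      rw [hφψ x] at h1
      exact h1

end Stmt17


theorem stmt17 {X Y : Type*} [MetricSpace X] [MetricSpace Y]
    [CompleteSpace X] [CompleteSpace Y]
    (J : (Y → ℝ) → (X → ℝ)) (J' : (X → ℝ) → (Y → ℝ))
    -- J is a bijection between the sets of 1-Lipschitz functions, with inverse J'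
    (hJF : ∀ f : Y → ℝ, LipschitzWith 1 f → LipschitzWith 1 (J f))
    (hJ'G : ∀ h : X → ℝ, LipschitzWith 1 h → LipschitzWith 1 (J' h))
    (hJJ' : ∀ f : Y → ℝ, LipschitzWith 1 f → J' (J f) = f)
    (hJ'J : ∀ h : X → ℝ, LipschitzWith 1 h → J (J' h) = h)
    -- J and J' are order reversing
    (hanti : ∀ f g : Y → ℝ, LipschitzWith 1 f → LipschitzWith 1 g → f ≤ g → J g ≤ J f)
    (hanti' : ∀ f g : X → ℝ, LipschitzWith 1 f → LipschitzWith 1 g → f ≤ g → J' g ≤ J' f)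
    -- J anti-commutes with the addition of scalars
    (hscal : ∀ f : Y → ℝ, LipschitzWith 1 f → ∀ l : ℝ,
      J (fun y => f y + l) = fun x => J f x - l) :
    ∃ (α : ℝ) (φ : X → Y), Isometry φ ∧ Function.Bijective φ ∧
      ∀ f : Y → ℝ, LipschitzWith 1 f → ∀ x, J f x = α - f (φ x) := by
  have gp : Stmt17.GoodPair (fun f : Y → ℝ => J (fun y => -(f y)))
      (fun h : X → ℝ => fun y => -(J' h y)) := by
    constructor
    · intro f hf
      exact hJF _ (Stmt17.lip_neg hf)
    · intro h hh
      exact Stmt17.lip_neg (hJ'G h hh)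
    · intro f hf
      funext y
      show -(J' (J (fun y => -(f y))) y) = f y
      rw [hJJ' _ (Stmt17.lip_neg hf)]
      simp
    · intro h hh
      show J (fun y => -(-(J' h y))) = h
      have e : (fun y => -(-(J' h y))) = J' h := funext fun y => neg_neg _
      rw [e, hJ'J h hh]
    · intro f g hf hg hle x
      have h1 : (fun y => -(g y)) ≤ (fun y => -(f y)) := fun y => by
        have := hle y
        simp only [neg_le_neg_iff]
        linarith
      exact hanti _ _ (Stmt17.lip_neg hg) (Stmt17.lip_neg hf) h1 x
    · intro f g hf hg hle y
      have h1 : f ≤ g := fun x => hle x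
      have h2 := hanti' f g hf hg h1 y
      simp only [neg_le_neg_iff]
      linarith
    · intro f hf l
      show J (fun y => -(f y + l)) = fun x => J (fun y => -(f y)) x + l
      have e : (fun y => -(f y + l)) = fun y => (-(f y)) + (-l) := funext fun y => by ring
      rw [e, hscal _ (Stmt17.lip_neg hf) (-l)]
      funext x
      ring
  obtain ⟨α, φ, hiso, hbij, hfor⟩ := Stmt17.Tmain gp
  refine ⟨α, φ, hiso, hbij, ?_⟩
  intro f hf x
  have h1 := hfor (fun y => -(f y)) (Stmt17.lip_neg hf) x
  simp only [neg_neg] at h1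
  have h2 : J f x = α + -(f (φ x)) := h1
  linarith
end

section
/- The sup-irreducible elements of the space of proper convex lower semicontinuous functions on a locally convex Hausdorff topological vector space X are exactly the continuous affine maps x ↦ ⟨p, x⟩ + λ with p ∈ X* and λ ∈ ℝ. -/
/-!
An affine function `a` is sup-irreducible: if `a = g ⊔ h` with `g, h` convex and
`g x < a x`, `h y < a y`, then at the midpoint of `x` and `y` both `g` and `h` stay strictly
below `a`.

Conversely, by Hahn–Banach separation of the closed convex epigraph, a proper convex lsc `f` is
the supremum of its continuous affine minorants `p + l`. If two minorants have slopes that differ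
at some `v`, say `p₁ v < c < p₂ v`, split the minorants according to whether `p v ≤ c` or
`p v ≥ c`. Their two suprema are proper convex lsc with maximum `f`, but neither is `f`: the first
grows along `v` with slope at most `c`, whereas `f ≥ p₂ + l₂` grows with slope `p₂ v > c`, and
symmetrically along `-v`. So all minorants share one slope `p`, and then `f` is a translate of
`p`.
-/

/-- Proper convex lower semicontinuous functions with values in `(-∞, +∞]`
(seen inside `EReal`). -/
def PCLsc {X : Type*} [AddCommGroup X] [Module ℝ X] [TopologicalSpace X] :
    Set (X → EReal) :=
  {f | (∀ x, f x ≠ ⊥) ∧ (∃ x, f x ≠ ⊤) ∧ LowerSemicontinuous f ∧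
    ∀ x y : X, ∀ t : ℝ, t ∈ Set.Ioo (0 : ℝ) 1 →
      f (t • x + (1 - t) • y) ≤ (t : EReal) * f x + ((1 - t : ℝ) : EReal) * f y}

/-- `f` is a sup-irreducible element of `G`. -/
def SupIrredIn {X : Type*} (G : Set (X → EReal)) (f : X → EReal) : Prop :=
  f ∈ G ∧ ∀ g ∈ G, ∀ h ∈ G, f = g ⊔ h → f = g ∨ f = h

open Set

lemma nonpos_of_forall_mul_le {a b : ℝ} (h : ∀ t : ℝ, 0 ≤ t → t * a ≤ b) : a ≤ 0 := by
  by_contra! ha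
  have := h ((|b| + 1) / a) (by positivity)
  rw [div_mul_cancel₀ _ ha.ne'] at this
  linarith [le_abs_self b]

section Affine

variable {X : Type*} [AddCommGroup X] [Module ℝ X] [TopologicalSpace X]

def affineEReal (p : X →L[ℝ] ℝ) (l : ℝ) (x : X) : EReal := ((p x + l : ℝ) : EReal)

lemma affineEReal_smul_add_one_sub_smul (p : X →L[ℝ] ℝ) (l : ℝ) (x y : X) (t : ℝ) :
    affineEReal p l (t • x + (1 - t) • y) =
      (t : EReal) * affineEReal p l x + ((1 - t : ℝ) : EReal) * affineEReal p l y := by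
  simp only [affineEReal, map_add, map_smul, smul_eq_mul, ← EReal.coe_mul, ← EReal.coe_add]
  congr 1
  ring

lemma continuous_affineEReal (p : X →L[ℝ] ℝ) (l : ℝ) : Continuous (affineEReal p l) :=
  continuous_coe_real_ereal.comp (p.continuous.add continuous_const)

lemma affineEReal_mem_PCLsc (p : X →L[ℝ] ℝ) (l : ℝ) : affineEReal p l ∈ PCLsc :=
  ⟨fun _ => EReal.coe_ne_bot _, ⟨0, EReal.coe_ne_top _⟩,
    (continuous_affineEReal p l).lowerSemicontinuous,
    fun x y t _ => (affineEReal_smul_add_one_sub_smul p l x y t).le⟩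

lemma lt_affineEReal_of_le {g : X → EReal} (hg : g ∈ PCLsc) {p : X →L[ℝ] ℝ} {l : ℝ}
    (hle : g ≤ affineEReal p l) {x y : X}
    (hlt : g x < affineEReal p l x ∨ g y < affineEReal p l y) {t : ℝ} (ht : t ∈ Ioo 0 1) :
    g (t • x + (1 - t) • y) < affineEReal p l (t • x + (1 - t) • y) := by
  have hfin : ∀ z, g z ≠ ⊤ := fun z => ne_top_of_le_ne_top (EReal.coe_ne_top _) (hle z)
  have hconv := hg.2.2.2 x y t ht
  have hx := hle x
  have hy := hle y
  rw [affineEReal_smul_add_one_sub_smul]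
  simp only [affineEReal] at hx hy hlt ⊢
  lift g x to ℝ using ⟨hfin x, hg.1 x⟩ with a
  lift g y to ℝ using ⟨hfin y, hg.1 y⟩ with b
  refine hconv.trans_lt ?_
  norm_cast at hx hy hlt ⊢
  obtain ⟨ht₀, ht₁⟩ := ht
  rcases hlt with hlt | hlt <;> nlinarith

lemma affineEReal_supIrredIn (p : X →L[ℝ] ℝ) (l : ℝ) : SupIrredIn PCLsc (affineEReal p l) := by
  refine ⟨affineEReal_mem_PCLsc p l, fun g hg h hh hgh => ?_⟩
  by_contra! hne
  obtain ⟨x, hx⟩ := Function.ne_iff.1 hne.1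
  obtain ⟨y, hy⟩ := Function.ne_iff.1 hne.2
  have hg_le : g ≤ affineEReal p l := hgh ▸ le_sup_left
  have hh_le : h ≤ affineEReal p l := hgh ▸ le_sup_right
  have ht : (1 / 2 : ℝ) ∈ Ioo 0 1 := by norm_num
  have hgm := lt_affineEReal_of_le hg hg_le (y := y) (Or.inl ((hg_le x).lt_of_ne' hx)) ht
  have hhm := lt_affineEReal_of_le hh hh_le (x := x) (Or.inr ((hh_le y).lt_of_ne' hy)) ht
  exact (max_lt hgm hhm).ne (congrFun hgh _).symm

end Affine

section Minorants

variable {X : Type*} [AddCommGroup X] [Module ℝ X] [TopologicalSpace X]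

def affineMinorants (f : X → EReal) : Set ((X →L[ℝ] ℝ) × ℝ) := {q | affineEReal q.1 q.2 ≤ f}

noncomputable def supAff (S : Set ((X →L[ℝ] ℝ) × ℝ)) (x : X) : EReal :=
  ⨆ q ∈ S, affineEReal q.1 q.2 x

lemma affineEReal_le_supAff {S : Set ((X →L[ℝ] ℝ) × ℝ)} {q : (X →L[ℝ] ℝ) × ℝ} (hq : q ∈ S) :
    affineEReal q.1 q.2 ≤ supAff S :=
  fun _ => le_iSup₂_of_le q hq le_rfl

lemma supAff_le_iff {S : Set ((X →L[ℝ] ℝ) × ℝ)} {f : X → EReal} :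
    supAff S ≤ f ↔ S ⊆ affineMinorants f :=
  ⟨fun h _ hq => (affineEReal_le_supAff hq).trans h,
    fun h x => iSup₂_le fun _ hq => h hq x⟩

lemma supAff_union (S T : Set ((X →L[ℝ] ℝ) × ℝ)) : supAff (S ∪ T) = supAff S ⊔ supAff T :=
  funext fun _ => iSup_union

lemma supAff_mem_PCLsc {S : Set ((X →L[ℝ] ℝ) × ℝ)} (hS : S.Nonempty)
    (hfin : ∃ x, supAff S x ≠ ⊤) : supAff S ∈ PCLsc := by
  obtain ⟨q₀, hq₀⟩ := hS
  refine ⟨fun x => ?_, hfin, ?_, fun x y t ht => iSup₂_le fun q hq => ?_⟩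
  · exact ne_bot_of_le_ne_bot (EReal.coe_ne_bot _) (affineEReal_le_supAff hq₀ x)
  · exact lowerSemicontinuous_biSup fun q _ => (continuous_affineEReal q.1 q.2).lowerSemicontinuous
  · rw [affineEReal_smul_add_one_sub_smul]
    have ht₀ : (0 : EReal) ≤ t := EReal.coe_nonneg.2 ht.1.le
    have ht₁ : (0 : EReal) ≤ ((1 - t : ℝ) : EReal) := EReal.coe_nonneg.2 (by linarith [ht.2])
    gcongr
    · exact affineEReal_le_supAff hq x
    · exact affineEReal_le_supAff hq y

lemma supAff_add_of_forall_fst_eq {S : Set ((X →L[ℝ] ℝ) × ℝ)} {p : X →L[ℝ] ℝ}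
    (hS : ∀ q ∈ S, q.1 = p) (x y : X) : supAff S (x + y) = p y + supAff S x := by
  have hle : ∀ x y, supAff S (x + y) ≤ p y + supAff S x := fun x y =>
    iSup₂_le fun q hq => by
      calc affineEReal q.1 q.2 (x + y) = p y + affineEReal q.1 q.2 x := by
            simp only [affineEReal, map_add, hS q hq, ← EReal.coe_add]
            ring_nf
        _ ≤ p y + supAff S x := by gcongr; exact affineEReal_le_supAff hq x
  refine le_antisymm (hle x y) ?_
  calc (p y : EReal) + supAff S x = p y + supAff S (x + y + -y) := by rw [add_neg_cancel_right]
    _ ≤ p y + (p (-y) + supAff S (x + y)) := by gcongr; exact hle _ _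
    _ = supAff S (x + y) := by
      rw [← add_assoc, map_neg, ← EReal.coe_add, add_neg_cancel, EReal.coe_zero, zero_add]

lemma apply_le_of_le_supAff {S : Set ((X →L[ℝ] ℝ) × ℝ)} {v : X} {c : ℝ}
    (hS : ∀ q ∈ S, q.1 v ≤ c) {x₀ : X} (hx₀ : supAff S x₀ ≠ ⊤) {p : X →L[ℝ] ℝ} {l : ℝ}
    (hpl : affineEReal p l ≤ supAff S) : p v ≤ c := by
  set ρ := (supAff S x₀).toReal
  have hρ : ∀ q ∈ S, q.1 x₀ + q.2 ≤ ρ := fun q hq =>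
    EReal.coe_le_coe_iff.1 ((affineEReal_le_supAff hq x₀).trans (EReal.le_coe_toReal hx₀))
  have hray : ∀ τ : ℝ, 0 ≤ τ → supAff S (x₀ + τ • v) ≤ ((ρ + τ * c : ℝ) : EReal) :=
    fun τ hτ => iSup₂_le fun q hq => by
      have := mul_le_mul_of_nonneg_left (hS q hq) hτ
      simp only [affineEReal, map_add, map_smul, smul_eq_mul, EReal.coe_le_coe_iff]
      linarith [hρ q hq]
  have hp : ∀ τ : ℝ, 0 ≤ τ → τ * (p v - c) ≤ ρ - (p x₀ + l) := fun τ hτ => by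
    have := EReal.coe_le_coe_iff.1 ((hpl (x₀ + τ • v)).trans (hray τ hτ))
    simp only [map_add, map_smul, smul_eq_mul] at this
    linarith
  linarith [nonpos_of_forall_mul_le hp]

end Minorants

section Separation

variable {X : Type*} [AddCommGroup X] [Module ℝ X] [TopologicalSpace X] {f : X → EReal}

lemma isClosed_epigraph_of_mem_PCLsc (hf : f ∈ PCLsc) : IsClosed {z : X × ℝ | f z.1 ≤ z.2} :=
  hf.2.2.1.isClosed_epigraph.preimage
    (continuous_fst.prodMk (continuous_coe_real_ereal.comp continuous_snd))

lemma convex_epigraph_of_mem_PCLsc (hf : f ∈ PCLsc) : Convex ℝ {z : X × ℝ | f z.1 ≤ z.2} := by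
  refine convex_iff_forall_pos.2 fun z hz w hw a b ha hb hab => ?_
  obtain rfl : b = 1 - a := by linarith
  have ha₀ : (0 : EReal) ≤ a := EReal.coe_nonneg.2 ha.le
  have hb₀ : (0 : EReal) ≤ ((1 - a : ℝ) : EReal) := EReal.coe_nonneg.2 hb.le
  simp only [mem_ofPred_eq, Prod.fst_add, Prod.snd_add, Prod.smul_fst, Prod.smul_snd,
    smul_eq_mul] at hz hw ⊢
  calc f (a • z.1 + (1 - a) • w.1) ≤ a * f z.1 + ((1 - a : ℝ) : EReal) * f w.1 :=
        hf.2.2.2 _ _ _ ⟨ha, by linarith⟩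
    _ ≤ a * z.2 + ((1 - a : ℝ) : EReal) * w.2 := by gcongr
    _ = ((a * z.2 + (1 - a) * w.2 : ℝ) : EReal) := by norm_cast

lemma slope_nonpos_of_separation {p : X →L[ℝ] ℝ} {s u : ℝ}
    (hsep : ∀ x (t : ℝ), f x ≤ t → p x + s * t < u) {x₀ : X} (hx₀ : f x₀ ≠ ⊤) : s ≤ 0 := by
  set ρ := (f x₀).toReal
  refine nonpos_of_forall_mul_le (b := u - p x₀ - s * ρ) fun τ hτ => ?_
  have := hsep x₀ (ρ + τ) ((EReal.le_coe_toReal hx₀).trans (EReal.coe_le_coe_iff.2 (by linarith)))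
  linarith

lemma exists_mem_affineMinorants_gt_of_separation {p : X →L[ℝ] ℝ} {s u : ℝ} (hs : s < 0)
    (hsep : ∀ x (t : ℝ), f x ≤ t → p x + s * t < u) {x₁ : X} {r : ℝ} (hx₁ : u < p x₁ + s * r) :
    ∃ q ∈ affineMinorants f, r < q.1 x₁ + q.2 := by
  have hσ : 0 < -s := neg_pos.2 hs
  have happly : ∀ x, ((-s)⁻¹ • p) x + -((-s)⁻¹ * u) = (-s)⁻¹ * (p x - u) := fun x => by
    rw [smul_apply, smul_eq_mul]
    ring
  refine ⟨((-s)⁻¹ • p, -((-s)⁻¹ * u)), fun x => ?_, ?_⟩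
  · refine EReal.le_of_forall_lt_iff_le.1 fun t ht => ?_
    have := hsep x t ht.le
    rw [affineEReal, happly, EReal.coe_le_coe_iff, inv_mul_le_iff₀ hσ]
    linarith
  · rw [happly, lt_inv_mul_iff₀ hσ]
    linarith

variable [IsTopologicalAddGroup X] [ContinuousSMul ℝ X] [LocallyConvexSpace ℝ X]

lemma exists_separation_of_lt (hf : f ∈ PCLsc) {x₁ : X} {r : ℝ} (hr : (r : EReal) < f x₁) :
    ∃ (p : X →L[ℝ] ℝ) (s u : ℝ),
      (∀ x (t : ℝ), f x ≤ t → p x + s * t < u) ∧ u < p x₁ + s * r := by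
  obtain ⟨φ, u, hφ, hu⟩ := geometric_hahn_banach_closed_point (convex_epigraph_of_mem_PCLsc hf)
    (isClosed_epigraph_of_mem_PCLsc hf) (x := (x₁, r)) hr.not_ge
  have hφ_apply : ∀ x t, φ (x, t) = φ.comp (.inl ℝ X ℝ) x + t * φ (0, 1) := fun x t => by
    rw [ContinuousLinearMap.comp_apply, ContinuousLinearMap.inl_apply, ← smul_eq_mul, ← map_smul,
      ← map_add, Prod.smul_mk, smul_zero, smul_eq_mul, mul_one, Prod.mk_add_mk, add_zero,
      zero_add]
  refine ⟨φ.comp (.inl ℝ X ℝ), φ (0, 1), u, fun x t hxt => ?_, ?_⟩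
  · have := hφ (x, t) hxt
    rwa [hφ_apply, mul_comm] at this
  · rwa [hφ_apply, mul_comm] at hu

lemma exists_mem_affineMinorants_gt_of_ne_top (hf : f ∈ PCLsc) {x₁ : X} (hx₁ : f x₁ ≠ ⊤) {r : ℝ}
    (hr : (r : EReal) < f x₁) : ∃ q ∈ affineMinorants f, r < q.1 x₁ + q.2 := by
  obtain ⟨p, s, u, hsep, hu⟩ := exists_separation_of_lt hf hr
  lift f x₁ to ℝ using ⟨hx₁, hf.1 x₁⟩ with ρ hρ
  have hρu := hsep x₁ ρ hρ.ge
  have hs : s < 0 := by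
    have : s * (ρ - r) < 0 := by linarith
    exact neg_of_mul_neg_left this (sub_pos.2 (EReal.coe_lt_coe_iff.1 hr)).le
  exact exists_mem_affineMinorants_gt_of_separation hs hsep hu

lemma affineMinorants_nonempty (hf : f ∈ PCLsc) : (affineMinorants f).Nonempty := by
  obtain ⟨x₀, hx₀⟩ := hf.2.1
  lift f x₀ to ℝ using ⟨hx₀, hf.1 x₀⟩ with ρ hρ
  obtain ⟨q, hq, -⟩ := exists_mem_affineMinorants_gt_of_ne_top hf (hρ ▸ hx₀) (r := ρ - 1)
    (hρ ▸ EReal.coe_lt_coe_iff.2 (by linarith))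
  exact ⟨q, hq⟩

lemma exists_mem_affineMinorants_gt (hf : f ∈ PCLsc) {x₁ : X} {r : ℝ}
    (hr : (r : EReal) < f x₁) : ∃ q ∈ affineMinorants f, r < q.1 x₁ + q.2 := by
  obtain ⟨p, s, u, hsep, hu⟩ := exists_separation_of_lt hf hr
  obtain ⟨x₀, hx₀⟩ := hf.2.1
  rcases (slope_nonpos_of_separation hsep hx₀).lt_or_eq with hs | rfl
  · exact exists_mem_affineMinorants_gt_of_separation hs hsep hu
  simp only [zero_mul, add_zero] at hsep hu
  -- `p - u` is negative on the domain of `f` and positive at `x₁`: tilt a minorant by it.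
  obtain ⟨q, hq⟩ := affineMinorants_nonempty hf
  obtain ⟨τ, hτ, hrτ⟩ : ∃ τ : ℝ, 0 ≤ τ ∧ r < q.1 x₁ + q.2 + τ * (p x₁ - u) := by
    by_contra! h
    exact (sub_pos.2 hu).not_ge (nonpos_of_forall_mul_le (b := r - (q.1 x₁ + q.2))
      fun τ hτ => by linarith [h τ hτ])
  refine ⟨(q.1 + τ • p, q.2 - τ * u), fun x => ?_, ?_⟩
  · refine EReal.le_of_forall_lt_iff_le.1 fun t ht => ?_
    have hpx := mul_le_mul_of_nonneg_left (hsep x t ht.le).le hτ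
    have hqx := EReal.coe_le_coe_iff.1 ((hq x).trans ht.le)
    simp only [affineEReal, add_apply, smul_apply, smul_eq_mul, EReal.coe_le_coe_iff] at hqx ⊢
    linarith
  · simp only [add_apply, smul_apply, smul_eq_mul]
    linarith

lemma supAff_affineMinorants (hf : f ∈ PCLsc) : supAff (affineMinorants f) = f := by
  refine le_antisymm (supAff_le_iff.2 subset_rfl) fun x => ?_
  refine EReal.ge_of_forall_gt_iff_ge.1 fun r hr => ?_
  obtain ⟨q, hq, hrq⟩ := exists_mem_affineMinorants_gt hf hr
  exact (EReal.coe_le_coe_iff.2 hrq.le).trans (affineEReal_le_supAff hq x)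

end Separation

section Irreducible

variable {X : Type*} [AddCommGroup X] [Module ℝ X] [TopologicalSpace X]
  [IsTopologicalAddGroup X] [ContinuousSMul ℝ X] [LocallyConvexSpace ℝ X] {f : X → EReal}

lemma apply_le_of_supIrredIn (hf : SupIrredIn PCLsc f) {q₁ q₂ : (X →L[ℝ] ℝ) × ℝ}
    (hq₁ : q₁ ∈ affineMinorants f) (hq₂ : q₂ ∈ affineMinorants f) (v : X) :
    q₁.1 v ≤ q₂.1 v := by
  by_contra! hlt
  obtain ⟨c, hc₂, hc₁⟩ := exists_between hlt
  set S₁ := affineMinorants f ∩ {q | q.1 v ≤ c}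
  set S₂ := affineMinorants f ∩ {q | q.1 (-v) ≤ -c}
  have hA : affineMinorants f = S₁ ∪ S₂ := by
    rw [← inter_union_distrib_left, eq_comm, inter_eq_left]
    intro q _
    simp only [mem_union, mem_ofPred_eq, map_neg, neg_le_neg_iff]
    exact le_total _ _
  obtain ⟨x₀, hx₀⟩ := hf.1.2.1
  have hmem : ∀ S ⊆ affineMinorants f, S.Nonempty → supAff S ∈ PCLsc := fun S hSA hS =>
    supAff_mem_PCLsc hS ⟨x₀, ne_top_of_le_ne_top hx₀ (supAff_le_iff.2 hSA x₀)⟩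
  have hsplit : f = supAff S₁ ⊔ supAff S₂ := by
    rw [← supAff_union, ← hA, supAff_affineMinorants hf.1]
  have hS₁ : q₂ ∈ S₁ := ⟨hq₂, hc₂.le⟩
  have hS₂ : q₁ ∈ S₂ := ⟨hq₁, by simpa only [mem_ofPred_eq, map_neg, neg_le_neg_iff] using hc₁.le⟩
  rcases hf.2 _ (hmem S₁ inter_subset_left ⟨_, hS₁⟩) _ (hmem S₂ inter_subset_left ⟨_, hS₂⟩) hsplit
    with hf₁ | hf₂
  · have := apply_le_of_le_supAff (fun q hq => hq.2) (hf₁ ▸ hx₀) (hf₁ ▸ hq₁)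
    linarith
  · have := apply_le_of_le_supAff (fun q hq => hq.2) (hf₂ ▸ hx₀) (hf₂ ▸ hq₂)
    rw [map_neg] at this
    linarith

lemma exists_eq_affineEReal_of_supIrredIn (hf : SupIrredIn PCLsc f) :
    ∃ (p : X →L[ℝ] ℝ) (l : ℝ), f = affineEReal p l := by
  obtain ⟨q₀, hq₀⟩ := affineMinorants_nonempty hf.1
  have hslope : ∀ q ∈ affineMinorants f, q.1 = q₀.1 := fun q hq =>
    ContinuousLinearMap.ext fun v =>
      le_antisymm (apply_le_of_supIrredIn hf hq hq₀ v) (apply_le_of_supIrredIn hf hq₀ hq v)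
  obtain ⟨x₀, hx₀⟩ := hf.1.2.1
  lift f x₀ to ℝ using ⟨hx₀, hf.1.1 x₀⟩ with ρ hρ
  refine ⟨q₀.1, ρ - q₀.1 x₀, funext fun x => ?_⟩
  have htranslate := supAff_add_of_forall_fst_eq hslope x₀ (x - x₀)
  rw [supAff_affineMinorants hf.1, add_sub_cancel, ← hρ] at htranslate
  rw [htranslate, affineEReal, map_sub, ← EReal.coe_add]
  ring_nf

end Irreducible

theorem stmt18_general {X : Type*} [AddCommGroup X] [Module ℝ X] [TopologicalSpace X]
    [IsTopologicalAddGroup X] [ContinuousSMul ℝ X] [LocallyConvexSpace ℝ X] :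
    {f : X → EReal | SupIrredIn (PCLsc (X := X)) f} =
      {f | ∃ (p : X →L[ℝ] ℝ) (l : ℝ), f = fun x => ((p x + l : ℝ) : EReal)} := by
  ext f
  constructor
  · exact exists_eq_affineEReal_of_supIrredIn
  · rintro ⟨p, l, rfl⟩
    exact affineEReal_supIrredIn p l

theorem stmt18 {X : Type*} [AddCommGroup X] [Module ℝ X] [TopologicalSpace X]
    [IsTopologicalAddGroup X] [ContinuousSMul ℝ X] [LocallyConvexSpace ℝ X] [T2Space X] :
    {f : X → EReal | SupIrredIn (PCLsc (X := X)) f} =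
      {f | ∃ (p : X →L[ℝ] ℝ) (l : ℝ), f = fun x => ((p x + l : ℝ) : EReal)} :=
  stmt18_general
end
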